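/- arXiv:1412.1537 — 4 statements merged into one kernel-verified Lean document; each statement's English description precedes it below -/
import Mathlib

section
/- Let n ≥ 2 and ψ ∈ C²(D). Define the 1-form J on D with components J_β := Sψ·∂_βψ − (1/2)·∂_βf·( −(∂_tψ)² + |∇_xψ|² ) + ((n−1)/4)·ψ·∂_βψ for β = 0, 1, …, n. Then the Minkowski divergence satisfies div_g J = □ψ · S_*ψ everywhere on D. -/
open Real MeasureTheory
open scoped BigOperators

noncomputable section

/-- Minkowski spacetime `ℝ^{1+n}`, with coordinates `(t, x)`. -/
abbrev Spacetime (n : ℕ) := ℝ × EuclideanSpace ℝ (Fin n)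

/-- The exterior `D` of the light cone: `{(t,x) : |t| < |x|}`. -/
def Dom (n : ℕ) : Set (Spacetime n) := {p | |p.1| < ‖p.2‖}

/-- Partial derivative in the time direction. -/
def dt {n : ℕ} (φ : Spacetime n → ℝ) (p : Spacetime n) : ℝ :=
  fderiv ℝ φ p (1, 0)

/-- Partial derivative in the `i`-th spatial direction. -/
def dx {n : ℕ} (i : Fin n) (φ : Spacetime n → ℝ) (p : Spacetime n) : ℝ :=
  fderiv ℝ φ p (0, EuclideanSpace.single i 1)

/-- The wave operator `□φ = −∂²_t φ + Δ_x φ`. -/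
def box {n : ℕ} (φ : Spacetime n → ℝ) (p : Spacetime n) : ℝ :=
  - dt (dt φ) p + ∑ i, dx i (dx i φ) p

/-- Null coordinate `u = (t − r)/2`. -/
def uu {n : ℕ} (p : Spacetime n) : ℝ := (p.1 - ‖p.2‖) / 2

/-- Null coordinate `v = (t + r)/2`. -/
def vv {n : ℕ} (p : Spacetime n) : ℝ := (p.1 + ‖p.2‖) / 2

/-- Radial derivative `∂_r φ = (x/|x|)·∇_x φ`. -/
def dr {n : ℕ} (φ : Spacetime n → ℝ) (p : Spacetime n) : ℝ :=
  (∑ i, p.2 i * dx i φ p) / ‖p.2‖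

/-- The hyperbolic square distance `f(t,x) = (|x|² − t²)/4 = −uv`. -/
def ff {n : ℕ} (p : Spacetime n) : ℝ := (‖p.2‖ ^ 2 - p.1 ^ 2) / 4

/-- `G_F(s) := −(s F'(s))'`. -/
def GF (F : ℝ → ℝ) (s : ℝ) : ℝ := - deriv (fun t => t * deriv F t) s

/-- `H_F(s) := (1/2)(s G_F(s))'`. -/
def HF (F : ℝ → ℝ) (s : ℝ) : ℝ := (1 / 2) * deriv (fun t => t * GF F t) s

/-- `Sφ := ⟨∇f,∇φ⟩_g = (1/2)(t ∂_t φ + r ∂_r φ)`. -/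
def Sop {n : ℕ} (φ : Spacetime n → ℝ) (q : Spacetime n) : ℝ :=
  (1 / 2) * (q.1 * dt φ q + ‖q.2‖ * dr φ q)

/-- `S_*φ := Sφ + ((n−1)/4) φ`. -/
def Sstar {n : ℕ} (φ : Spacetime n → ℝ) (q : Spacetime n) : ℝ :=
  Sop φ q + (((n : ℝ) - 1) / 4) * φ q

/-!
On `D` the multiplier is `Sψ = ⟨∇f, ∇ψ⟩_g` (the factors `r` and `1/r` cancel), so with
`E := ⟨∇ψ, ∇ψ⟩_g` the current is `J = S_*ψ ∇ψ − ½ E ∇f`. The Leibniz rule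
`div_g (a ∇b) = ⟨∇a, ∇b⟩_g + a □b` gives
`div_g J = S_*ψ □ψ + ⟨∇Sψ, ∇ψ⟩_g + ((n−1)/4) E − ½ ⟨∇E, ∇f⟩_g − ½ E □f`.
Since `∇²f = ½ g`, we have `⟨∇Sψ, ∇ψ⟩_g = ∇²ψ(∇f, ∇ψ) + ½ E` and `½ ⟨∇E, ∇f⟩_g = ∇²ψ(∇ψ, ∇f)`:
the Hessian terms cancel by symmetry of `∇²ψ`, and `□f = (n+1)/2` makes the `E` terms cancel.
-/

open Filter Topology

namespace Spacetime

variable {n : ℕ}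

/-- Coordinates are indexed by `Option (Fin n)`: `none` is time, `some i` is `xⁱ`. -/
def basis : Option (Fin n) → Spacetime n
  | none => (1, 0)
  | some i => (0, EuclideanSpace.single i 1)

def coord : Option (Fin n) → Spacetime n →L[ℝ] ℝ
  | none => ContinuousLinearMap.fst ℝ ℝ _
  | some i => (EuclideanSpace.proj i).comp (ContinuousLinearMap.snd ℝ ℝ _)

def metricSign : Option (Fin n) → ℝ
  | none => -1
  | some _ => 1

lemma coord_basis (α β : Option (Fin n)) : coord α (basis β) = if α = β then 1 else 0 := by
  cases α <;> cases β <;> simp [coord, basis, eq_comm]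

lemma metricSign_mul_self (α : Option (Fin n)) : metricSign α * metricSign α = 1 := by
  cases α <;> norm_num [metricSign]

def partialD (α : Option (Fin n)) (φ : Spacetime n → ℝ) (p : Spacetime n) : ℝ :=
  fderiv ℝ φ p (basis α)

def gradInner (a b : Spacetime n → ℝ) (p : Spacetime n) : ℝ :=
  ∑ α, metricSign α * partialD α a p * partialD α b p

def divergence (P : Option (Fin n) → Spacetime n → ℝ) (p : Spacetime n) : ℝ :=
  ∑ α, metricSign α * partialD α (P α) p

lemma divergence_eq (P : Option (Fin n) → Spacetime n → ℝ) (p : Spacetime n) :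
    divergence P p = -dt (P none) p + ∑ j, dx j (P (some j)) p := by
  simp [divergence, Fintype.sum_option, metricSign, partialD, dt, dx, basis]

lemma box_eq_divergence (φ : Spacetime n → ℝ) (p : Spacetime n) :
    box φ p = divergence (fun α => partialD α φ) p := by
  rw [divergence_eq]; rfl

lemma gradInner_self (φ : Spacetime n → ℝ) (p : Spacetime n) :
    gradInner φ φ p = -(dt φ p) ^ 2 + ∑ i, (dx i φ p) ^ 2 := by
  simp [gradInner, Fintype.sum_option, metricSign, partialD, dt, dx, basis, sq]

section Calculus

variable {α β : Option (Fin n)} {a b : Spacetime n → ℝ} {p : Spacetime n}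

lemma partialD_add (ha : DifferentiableAt ℝ a p) (hb : DifferentiableAt ℝ b p) :
    partialD α (fun x => a x + b x) p = partialD α a p + partialD α b p := by
  simp [partialD, fderiv_fun_add ha hb]

lemma partialD_sub (ha : DifferentiableAt ℝ a p) (hb : DifferentiableAt ℝ b p) :
    partialD α (fun x => a x - b x) p = partialD α a p - partialD α b p := by
  simp [partialD, fderiv_fun_sub ha hb]

lemma partialD_mul (ha : DifferentiableAt ℝ a p) (hb : DifferentiableAt ℝ b p) :
    partialD α (fun x => a x * b x) p = partialD α a p * b p + a p * partialD α b p := by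
  simp only [partialD, fderiv_fun_mul ha hb, add_apply, smul_apply,
    smul_eq_mul]
  ring

lemma partialD_const_mul (ha : DifferentiableAt ℝ a p) (c : ℝ) :
    partialD α (fun x => c * a x) p = c * partialD α a p := by
  simp [partialD, fderiv_const_mul ha c]

lemma partialD_sum {ι : Type*} (s : Finset ι) {A : ι → Spacetime n → ℝ}
    (hA : ∀ i ∈ s, DifferentiableAt ℝ (A i) p) :
    partialD α (fun x => ∑ i ∈ s, A i x) p = ∑ i ∈ s, partialD α (A i) p := by
  simp [partialD, fderiv_fun_sum hA]

lemma partialD_coord : partialD β (coord α) p = if α = β then 1 else 0 := by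
  rw [partialD, (coord α).fderiv, coord_basis]

lemma partialD_congr (h : a =ᶠ[𝓝 p] b) : partialD α a p = partialD α b p := by
  rw [partialD, partialD, h.fderiv_eq]

lemma _root_.ContDiffAt.differentiableAt_partialD (h : ContDiffAt ℝ 2 a p) (α : Option (Fin n)) :
    DifferentiableAt ℝ (partialD α a) p :=
  ((h.fderiv_right le_rfl).differentiableAt one_ne_zero).clm_apply (differentiableAt_const _)

lemma _root_.ContDiffAt.partialD_comm (h : ContDiffAt ℝ 2 a p) (α β : Option (Fin n)) :
    partialD β (partialD α a) p = partialD α (partialD β a) p := by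
  have hd : DifferentiableAt ℝ (fderiv ℝ a) p :=
    (h.fderiv_right le_rfl).differentiableAt one_ne_zero
  have e : ∀ γ, fderiv ℝ (partialD γ a) p = (fderiv ℝ (fderiv ℝ a) p).flip (basis γ) := by
    intro γ
    rw [show partialD γ a = fun x => fderiv ℝ a x (basis γ) from rfl,
      fderiv_clm_apply hd (differentiableAt_const _)]
    simp
  rw [partialD, partialD, e, e, ContinuousLinearMap.flip_apply, ContinuousLinearMap.flip_apply]
  exact h.isSymmSndFDerivAt (by simp) _ _

lemma differentiableAt_gradInner (ha : ∀ α, DifferentiableAt ℝ (partialD α a) p)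
    (hb : ∀ α, DifferentiableAt ℝ (partialD α b) p) : DifferentiableAt ℝ (gradInner a b) p := by
  unfold gradInner
  fun_prop

lemma partialD_gradInner (ha : ∀ α, DifferentiableAt ℝ (partialD α a) p)
    (hb : ∀ α, DifferentiableAt ℝ (partialD α b) p) :
    partialD β (gradInner a b) p = ∑ α, metricSign α * (partialD β (partialD α a) p * partialD α b p
      + partialD α a p * partialD β (partialD α b) p) := by
  unfold gradInner
  rw [partialD_sum _ fun α _ => by fun_prop]
  refine Finset.sum_congr rfl fun α _ => ?_
  rw [partialD_mul (by fun_prop) (hb α), partialD_const_mul (ha α)]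
  ring

lemma gradInner_add_left {c : Spacetime n → ℝ} (ha : DifferentiableAt ℝ a p)
    (hb : DifferentiableAt ℝ b p) :
    gradInner (fun x => a x + b x) c p = gradInner a c p + gradInner b c p := by
  simp only [gradInner, partialD_add ha hb, ← Finset.sum_add_distrib]
  exact Finset.sum_congr rfl fun α _ => by ring

lemma gradInner_const_mul_left (ha : DifferentiableAt ℝ a p) (c : ℝ) :
    gradInner (fun x => c * a x) b p = c * gradInner a b p := by
  simp only [gradInner, partialD_const_mul ha, Finset.mul_sum]
  exact Finset.sum_congr rfl fun α _ => by ring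

end Calculus

section Divergence

variable {P Q : Option (Fin n) → Spacetime n → ℝ} {a b : Spacetime n → ℝ} {p : Spacetime n}

lemma divergence_congr (h : ∀ α, P α =ᶠ[𝓝 p] Q α) : divergence P p = divergence Q p :=
  Finset.sum_congr rfl fun α _ => by rw [partialD_congr (h α)]

lemma divergence_sub (hP : ∀ α, DifferentiableAt ℝ (P α) p)
    (hQ : ∀ α, DifferentiableAt ℝ (Q α) p) :
    divergence (fun α x => P α x - Q α x) p = divergence P p - divergence Q p := by
  simp only [divergence, partialD_sub (hP _) (hQ _), ← Finset.sum_sub_distrib, mul_sub]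

lemma divergence_mul_grad (ha : DifferentiableAt ℝ a p)
    (hb : ∀ α, DifferentiableAt ℝ (partialD α b) p) :
    divergence (fun α x => a x * partialD α b x) p
      = gradInner a b p + a p * divergence (fun α => partialD α b) p := by
  simp only [divergence, gradInner, partialD_mul ha (hb _), Finset.mul_sum,
    ← Finset.sum_add_distrib]
  exact Finset.sum_congr rfl fun α _ => by ring

end Divergence

lemma ff_eq_sum :
    (ff : Spacetime n → ℝ) = fun p => ∑ α, metricSign α / 4 * (coord α p * coord α p) := by
  ext p
  rw [ff, EuclideanSpace.real_norm_sq_eq]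
  simp only [Fintype.sum_option, metricSign, coord, sq, ContinuousLinearMap.coe_fst', ContinuousLinearMap.comp_apply,
    ContinuousLinearMap.coe_snd', PiLp.proj_apply]
  rw [← Finset.mul_sum]
  ring

lemma partialD_ff (α : Option (Fin n)) : partialD α ff = fun p => metricSign α / 2 * coord α p := by
  ext p
  have hc : ∀ β : Option (Fin n), DifferentiableAt ℝ (coord β) p :=
    fun β => (coord β).differentiableAt
  rw [ff_eq_sum, partialD_sum _ fun β _ => by fun_prop]
  have hterm : ∀ β, partialD α (fun x => metricSign β / 4 * (coord β x * coord β x)) p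
      = if β = α then metricSign α / 2 * coord α p else 0 := by
    intro β
    rw [partialD_const_mul (by fun_prop), partialD_mul (hc β) (hc β), partialD_coord]
    split_ifs with h
    · subst h; ring
    · ring
  simp [hterm]

lemma differentiableAt_partialD_ff (α : Option (Fin n)) (p : Spacetime n) :
    DifferentiableAt ℝ (partialD α ff) p := by
  rw [partialD_ff]; fun_prop

lemma divergence_grad_ff (p : Spacetime n) :
    divergence (fun α => partialD α ff) p = ((n : ℝ) + 1) / 2 := by
  have hdiag : ∀ α : Option (Fin n), partialD α (partialD α ff) p = metricSign α / 2 := by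
    intro α
    rw [partialD_ff, partialD_const_mul (coord α).differentiableAt, partialD_coord, if_pos rfl,
      mul_one]
  simp only [divergence, hdiag, Fintype.sum_option, metricSign]
  simp only [Finset.sum_const, Finset.card_univ, Fintype.card_fin, nsmul_eq_mul]
  ring

lemma gradInner_ff (φ : Spacetime n → ℝ) (p : Spacetime n) :
    gradInner ff φ p = (∑ α, coord α p * partialD α φ p) / 2 := by
  simp only [gradInner, partialD_ff, Finset.sum_div]
  refine Finset.sum_congr rfl fun α _ => ?_
  linear_combination coord α p * partialD α φ p / 2 * metricSign_mul_self α

lemma partialD_gradInner_ff {φ : Spacetime n → ℝ} {p : Spacetime n}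
    (hφ : ∀ α, DifferentiableAt ℝ (partialD α φ) p) (β : Option (Fin n)) :
    partialD β (gradInner ff φ) p
      = (partialD β φ p + ∑ α, coord α p * partialD β (partialD α φ) p) / 2 := by
  have hc : ∀ α : Option (Fin n), DifferentiableAt ℝ (coord α) p :=
    fun α => (coord α).differentiableAt
  have hS : gradInner ff φ = fun x => 2⁻¹ * ∑ α, coord α x * partialD α φ x :=
    funext fun x => by rw [gradInner_ff]; ring
  rw [hS, partialD_const_mul (by fun_prop), partialD_sum _ fun α _ => by fun_prop]
  simp only [partialD_mul (hc _) (hφ _), partialD_coord, ite_mul, one_mul, zero_mul,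
    Finset.sum_add_distrib, Finset.sum_ite_eq', Finset.mem_univ, if_true]
  ring

lemma gradInner_gradInner_ff {φ : Spacetime n → ℝ} {p : Spacetime n} (hφ : ContDiffAt ℝ 2 φ p) :
    gradInner (gradInner ff φ) φ p - gradInner (gradInner φ φ) ff p / 2
      = gradInner φ φ p / 2 := by
  have hd := hφ.differentiableAt_partialD
  have h1 : gradInner (gradInner ff φ) φ p = gradInner φ φ p / 2 + (∑ β, metricSign β *
      (∑ α, coord α p * partialD β (partialD α φ) p) * partialD β φ p) / 2 := by
    simp only [gradInner, partialD_gradInner_ff hd, Finset.sum_div, ← Finset.sum_add_distrib]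
    exact Finset.sum_congr rfl fun β _ => by ring
  have h2 : gradInner (gradInner φ φ) ff p
      = ∑ β, coord β p * ∑ α, metricSign α * partialD β (partialD α φ) p * partialD α φ p := by
    refine Finset.sum_congr rfl fun β _ => ?_
    have hsum : ∑ α, metricSign α * (partialD β (partialD α φ) p * partialD α φ p
          + partialD α φ p * partialD β (partialD α φ) p)
        = 2 * ∑ α, metricSign α * partialD β (partialD α φ) p * partialD α φ p := by
      rw [Finset.mul_sum]
      exact Finset.sum_congr rfl fun α _ => by ring
    rw [partialD_gradInner hd hd, hsum, partialD_ff]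
    linear_combination
      coord β p * (∑ α, metricSign α * partialD β (partialD α φ) p * partialD α φ p)
        * metricSign_mul_self β
  have hsymm : ∑ β, metricSign β * (∑ α, coord α p * partialD β (partialD α φ) p) * partialD β φ p
      = ∑ β, coord β p * ∑ α, metricSign α * partialD β (partialD α φ) p * partialD α φ p := by
    simp only [Finset.mul_sum, Finset.sum_mul]
    rw [Finset.sum_comm]
    refine Finset.sum_congr rfl fun β _ => Finset.sum_congr rfl fun α _ => ?_
    rw [hφ.partialD_comm]
    ring
  rw [h1, h2, hsymm]
  ring

lemma isOpen_dom : IsOpen (Dom n) :=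
  isOpen_lt continuous_fst.abs continuous_snd.norm

lemma sop_eq_gradInner_ff {φ : Spacetime n → ℝ} {p : Spacetime n} (hp : p ∈ Dom n) :
    Sop φ p = gradInner ff φ p := by
  have hr : ‖p.2‖ ≠ 0 := ((abs_nonneg p.1).trans_lt hp).ne'
  rw [gradInner_ff, Sop, dr, mul_div_cancel₀ _ hr, Fintype.sum_option]
  simp only [dt, dx, coord, partialD, basis, ContinuousLinearMap.coe_fst',
    ContinuousLinearMap.comp_apply, ContinuousLinearMap.coe_snd', PiLp.proj_apply]
  ring

end Spacetime

theorem multiplier_divergence_identity_general (n : ℕ)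
    (ψ : Spacetime n → ℝ) (hψ : ContDiffOn ℝ 2 ψ (Dom n)) :
    ∀ q ∈ Dom n,
      - dt (fun p => Sop ψ p * dt ψ p
            - (1 / 2) * dt ff p * (-(dt ψ p) ^ 2 + ∑ i, (dx i ψ p) ^ 2)
            + (((n : ℝ) - 1) / 4) * ψ p * dt ψ p) q
        + ∑ j, dx j (fun p => Sop ψ p * dx j ψ p
            - (1 / 2) * dx j ff p * (-(dt ψ p) ^ 2 + ∑ i, (dx i ψ p) ^ 2)
            + (((n : ℝ) - 1) / 4) * ψ p * dx j ψ p) q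
      = box ψ q * Sstar ψ q := by
  open Spacetime in
  intro q hq
  set c : ℝ := ((n : ℝ) - 1) / 4
  have hψq : ContDiffAt ℝ 2 ψ q := hψ.contDiffAt (isOpen_dom.mem_nhds hq)
  have hdψ := hψq.differentiableAt_partialD
  have hψ' : DifferentiableAt ℝ ψ q := hψq.differentiableAt two_ne_zero
  have hdf : ∀ α, DifferentiableAt ℝ (partialD α ff) q := (differentiableAt_partialD_ff · q)
  have hS : DifferentiableAt ℝ (gradInner ff ψ) q := differentiableAt_gradInner hdf hdψ
  have hE : DifferentiableAt ℝ (gradInner ψ ψ) q := differentiableAt_gradInner hdψ hdψ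
  let J : Option (Fin n) → Spacetime n → ℝ := fun α p => Sop ψ p * partialD α ψ p
    - 1 / 2 * partialD α ff p * gradInner ψ ψ p + c * ψ p * partialD α ψ p
  have hJ : ∀ α, J α =ᶠ[𝓝 q] fun p => (gradInner ff ψ p + c * ψ p) * partialD α ψ p
      - 1 / 2 * gradInner ψ ψ p * partialD α ff p := by
    intro α
    filter_upwards [isOpen_dom.mem_nhds hq] with p hp
    simp only [J, sop_eq_gradInner_ff hp]
    ring
  have hdivJ := divergence_congr hJ
  rw [divergence_sub (fun α => by fun_prop) (fun α => by fun_prop),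
    divergence_mul_grad (by fun_prop) hdψ, divergence_mul_grad (by fun_prop) hdf,
    gradInner_add_left hS (by fun_prop), gradInner_const_mul_left hψ', gradInner_const_mul_left hE,
    ← box_eq_divergence, divergence_grad_ff] at hdivJ
  simp only [← gradInner_self]
  refine (divergence_eq J q).symm.trans ?_
  rw [Sstar, sop_eq_gradInner_ff hq]
  linear_combination hdivJ + gradInner_gradInner_ff hψq

/-- **Identity (2.27)** (multiplier divergence identity): for `ψ ∈ C²(D)`, the 1-form
`J_β = Sψ·∂_βψ − (1/2)∂_βf·⟨∇ψ,∇ψ⟩_g + ((n−1)/4)ψ·∂_βψ` satisfies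
`div_g J = □ψ · S_*ψ` on `D`. -/
theorem multiplier_divergence_identity (n : ℕ) (hn : 2 ≤ n)
    (ψ : Spacetime n → ℝ) (hψ : ContDiffOn ℝ 2 ψ (Dom n)) :
    ∀ q ∈ Dom n,
      - dt (fun p => Sop ψ p * dt ψ p
            - (1 / 2) * dt ff p * (-(dt ψ p) ^ 2 + ∑ i, (dx i ψ p) ^ 2)
            + (((n : ℝ) - 1) / 4) * ψ p * dt ψ p) q
        + ∑ j, dx j (fun p => Sop ψ p * dx j ψ p
            - (1 / 2) * dx j ff p * (-(dt ψ p) ^ 2 + ∑ i, (dx i ψ p) ^ 2)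
            + (((n : ℝ) - 1) / 4) * ψ p * dx j ψ p) q
      = box ψ q * Sstar ψ q :=
  multiplier_divergence_identity_general n ψ hψ
end
end

section
/- Let n ≥ 2, F ∈ C^∞(0,∞), and U ∈ C¹(D × ℝ); write U̇ for the partial derivative of U in its last (ℝ-)variable and ∇_Q U for its partial gradient in the D-variable, and for a function φ on D abbreviate U(φ)(Q) := U(Q, φ(Q)) and U̇(φ)(Q) := U̇(Q, φ(Q)). Let φ ∈ C²(D), and set ψ := e^{−F(f)}·φ and L := e^{−F(f)}·( □φ + U̇(φ) ). Define the bulk function B := e^{−2F(f)}·( (n−1)/4 − f·F'(f) )·U̇(φ)·φ − e^{−2F(f)}·⟨∇f, (∇_Q U)(·, φ)⟩_g − 2·e^{−2F(f)}·( (n+1)/4 − f·F'(f) )·U(φ), and the 1-form P with components (β = 0, 1, …, n): P_β := e^{−2F(f)}·[ Sφ·∂_βφ − (1/2)·∂_βf·( −(∂_tφ)² + |∇_xφ|² ) ] + e^{−2F(f)}·∂_βf·U(φ) + e^{−2F(f)}·( (n−1)/4 − f·F'(f) )·φ·∂_βφ + e^{−2F(f)}·[ ( f·F'(f) − (n−1)/4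 )·F'(f) − (1/2)·G_F(f) ]·∂_βf·φ². Then everywhere on D: L·S_*ψ = 2·F'(f)·(S_*ψ)² + ( f·F'(f)·G_F(f) + H_F(f) )·ψ² + B + div_g P. -/
open Real MeasureTheory
open scoped BigOperators

noncomputable section

/-- `U̇(φ)(q)`: the partial derivative of `U` in its last (ℝ-)variable, evaluated at
`(q, φ(q))`. -/
def Udot {n : ℕ} (U : Spacetime n × ℝ → ℝ) (φ : Spacetime n → ℝ) (q : Spacetime n) : ℝ :=
  deriv (fun y => U (q, y)) (φ q)

/-- `⟨∇f, (∇_Q U)(·, φ)⟩_g (q)`: the Minkowski inner product of `∇f` with the partial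
gradient of `U` in the `D`-variable, evaluated at `(q, φ(q))`. -/
def gradfU {n : ℕ} (U : Spacetime n × ℝ → ℝ) (φ : Spacetime n → ℝ) (q : Spacetime n) : ℝ :=
  -(dt ff q * dt (fun p => U (p, φ q)) q) + ∑ i, dx i ff q * dx i (fun p => U (p, φ q)) q

/-- The bulk term `B = B_U^F` of the Carleman identity. -/
def Bulk {n : ℕ} (F : ℝ → ℝ) (U : Spacetime n × ℝ → ℝ) (φ : Spacetime n → ℝ)
    (q : Spacetime n) : ℝ :=
  Real.exp (-2 * F (ff q)) * (((n : ℝ) - 1) / 4 - ff q * deriv F (ff q)) * Udot U φ q * φ q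
    - Real.exp (-2 * F (ff q)) * gradfU U φ q
    - 2 * Real.exp (-2 * F (ff q)) * (((n : ℝ) + 1) / 4 - ff q * deriv F (ff q)) * U (q, φ q)

/-- The time component `P_0` of the current `P = P^F`. -/
def Pt {n : ℕ} (F : ℝ → ℝ) (U : Spacetime n × ℝ → ℝ) (φ : Spacetime n → ℝ)
    (q : Spacetime n) : ℝ :=
  Real.exp (-2 * F (ff q)) *
      (Sop φ q * dt φ q - (1 / 2) * dt ff q * (-(dt φ q) ^ 2 + ∑ i, (dx i φ q) ^ 2))
    + Real.exp (-2 * F (ff q)) * dt ff q * U (q, φ q)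
    + Real.exp (-2 * F (ff q)) * (((n : ℝ) - 1) / 4 - ff q * deriv F (ff q)) * φ q * dt φ q
    + Real.exp (-2 * F (ff q)) *
        ((ff q * deriv F (ff q) - ((n : ℝ) - 1) / 4) * deriv F (ff q) - (1 / 2) * GF F (ff q)) *
        dt ff q * (φ q) ^ 2

/-- The spatial components `P_j`, `j = 1, …, n`, of the current `P = P^F`. -/
def Px {n : ℕ} (F : ℝ → ℝ) (U : Spacetime n × ℝ → ℝ) (φ : Spacetime n → ℝ) (j : Fin n)
    (q : Spacetime n) : ℝ :=
  Real.exp (-2 * F (ff q)) *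
      (Sop φ q * dx j φ q - (1 / 2) * dx j ff q * (-(dt φ q) ^ 2 + ∑ i, (dx i φ q) ^ 2))
    + Real.exp (-2 * F (ff q)) * dx j ff q * U (q, φ q)
    + Real.exp (-2 * F (ff q)) * (((n : ℝ) - 1) / 4 - ff q * deriv F (ff q)) * φ q * dx j φ q
    + Real.exp (-2 * F (ff q)) *
        ((ff q * deriv F (ff q) - ((n : ℝ) - 1) / 4) * deriv F (ff q) - (1 / 2) * GF F (ff q)) *
        dx j ff q * (φ q) ^ 2

/-- The Minkowski divergence `div_g P = −∂_t P_0 + Σ_i ∂_{xⁱ} P_i` of the current `P^F`. -/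
def divP {n : ℕ} (F : ℝ → ℝ) (U : Spacetime n × ℝ → ℝ) (φ : Spacetime n → ℝ)
    (q : Spacetime n) : ℝ :=
  - dt (Pt F U φ) q + ∑ j, dx j (Px F U φ j) q

/-! ### Infrastructure: directional derivatives -/

namespace Carleman

variable {n : ℕ}

/-- time direction -/
def e0 (n : ℕ) : Spacetime n := (1, 0)
/-- spatial directions -/
def ex (j : Fin n) : Spacetime n := (0, EuclideanSpace.single j 1)

/-- directional derivative -/
def DD (v : Spacetime n) (h : Spacetime n → ℝ) (p : Spacetime n) : ℝ := fderiv ℝ h p v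

lemma dt_eq (φ : Spacetime n → ℝ) : dt φ = DD (e0 n) φ := rfl
lemma dx_eq (i : Fin n) (φ : Spacetime n → ℝ) : dx i φ = DD (ex i) φ := rfl

variable {a b h : Spacetime n → ℝ} {q v w : Spacetime n}

lemma DD_add (ha : DifferentiableAt ℝ a q) (hb : DifferentiableAt ℝ b q) :
    DD v (fun p => a p + b p) q = DD v a q + DD v b q := by
  simp [DD, fderiv_fun_add ha hb]

lemma DD_sub (ha : DifferentiableAt ℝ a q) (hb : DifferentiableAt ℝ b q) :
    DD v (fun p => a p - b p) q = DD v a q - DD v b q := by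
  simp [DD, fderiv_fun_sub ha hb]

lemma DD_mul (ha : DifferentiableAt ℝ a q) (hb : DifferentiableAt ℝ b q) :
    DD v (fun p => a p * b p) q = DD v a q * b q + a q * DD v b q := by
  simp [DD, fderiv_fun_mul ha hb]; ring

lemma DD_const (c : ℝ) : DD v (fun _ => c) q = 0 := by simp [DD]

lemma DD_const_mul (ha : DifferentiableAt ℝ a q) (c : ℝ) :
    DD v (fun p => c * a p) q = c * DD v a q := by
  simp [DD, fderiv_const_mul ha c]

lemma DD_neg : DD v (fun p => -(a p)) q = -DD v a q := by
  simp [DD, fderiv_neg]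

lemma DD_sq (ha : DifferentiableAt ℝ a q) :
    DD v (fun p => a p ^ 2) q = 2 * a q * DD v a q := by
  have : (fun p => a p ^ 2) = fun p => a p * a p := by funext p; ring
  rw [this, DD_mul ha ha]; ring

lemma DD_sum {A : Fin n → Spacetime n → ℝ} (hA : ∀ i, DifferentiableAt ℝ (A i) q) :
    DD v (fun p => ∑ i, A i p) q = ∑ i, DD v (A i) q := by
  simp [DD, fderiv_fun_sum (fun i _ => hA i)]

lemma DD_comp {g : ℝ → ℝ} (hg : DifferentiableAt ℝ g (h q)) (hh : DifferentiableAt ℝ h q) :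
    DD v (fun p => g (h p)) q = deriv g (h q) * DD v h q := by
  have H := (hg.hasDerivAt.comp_hasFDerivAt q hh.hasFDerivAt)
  have : (fun p => g (h p)) = g ∘ h := rfl
  rw [DD, this, H.fderiv]; simp [DD]

lemma DD_fst : DD v (fun p : Spacetime n => p.1) q = v.1 := by
  simp [DD, fderiv_fst]

lemma DD_coord (i : Fin n) : DD v (fun p : Spacetime n => p.2 i) q = v.2 i := by
  have : (fun p : Spacetime n => p.2 i) = fun p : Spacetime n =>
      (EuclideanSpace.proj (𝕜 := ℝ) i) p.2 := rfl
  rw [this, DD]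
  rw [show (fun p : Spacetime n => (EuclideanSpace.proj (𝕜 := ℝ) i) p.2)
      = ((EuclideanSpace.proj (𝕜 := ℝ) i).comp
          (ContinuousLinearMap.snd ℝ ℝ (EuclideanSpace ℝ (Fin n)))) from rfl]
  rw [ContinuousLinearMap.fderiv]
  rfl

end Carleman
namespace Carleman

variable {n : ℕ} {a b h : Spacetime n → ℝ} {q v w : Spacetime n}

lemma DD_div_const (ha : DifferentiableAt ℝ a q) (c : ℝ) :
    DD v (fun p => a p / c) q = DD v a q / c := by
  simp [DD, div_eq_mul_inv, fderiv_mul_const ha]; ring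

lemma diffAt_fst : DifferentiableAt ℝ (fun p : Spacetime n => p.1) q :=
  differentiableAt_fst

lemma diffAt_coord (i : Fin n) : DifferentiableAt ℝ (fun p : Spacetime n => p.2 i) q := by
  exact ((EuclideanSpace.proj (𝕜 := ℝ) i).comp
    (ContinuousLinearMap.snd ℝ ℝ (EuclideanSpace ℝ (Fin n)))).differentiableAt

@[simp] lemma e0_fst : (e0 n).1 = 1 := rfl
@[simp] lemma e0_snd (i : Fin n) : (e0 n).2 i = 0 := rfl
@[simp] lemma ex_fst (j : Fin n) : (ex j).1 = 0 := rfl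
lemma ex_snd (j i : Fin n) : (ex j).2 i = if i = j then 1 else 0 := by
  simp [ex, EuclideanSpace.single_apply]

lemma ff_eq (p : Spacetime n) : ff p = ((∑ i, p.2 i ^ 2) - p.1 ^ 2) / 4 := by
  have : ‖p.2‖ ^ 2 = ∑ i, p.2 i ^ 2 := by
    rw [EuclideanSpace.norm_eq]
    simp only [Real.norm_eq_abs, sq_abs]
    rw [Real.sq_sqrt (by positivity)]
  rw [ff, this]

lemma ff_eq' : (ff : Spacetime n → ℝ) = fun p => ((∑ i, p.2 i ^ 2) - p.1 ^ 2) / 4 :=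
  funext ff_eq

lemma diffAt_ff : DifferentiableAt ℝ (ff : Spacetime n → ℝ) q := by
  rw [ff_eq']
  have h : DifferentiableAt ℝ (fun p : Spacetime n => (∑ i, p.2 i ^ 2) - p.1 ^ 2) q :=
    (DifferentiableAt.fun_sum (fun i _ => (diffAt_coord i).pow 2)).sub (diffAt_fst.pow 2)
  simp only [div_eq_mul_inv]
  exact h.mul_const _

lemma DD_ff : DD v (ff : Spacetime n → ℝ) q = ((∑ i, q.2 i * v.2 i) - q.1 * v.1) / 2 := by
  rw [ff_eq', DD_div_const ((DifferentiableAt.fun_sum (fun i _ => (diffAt_coord i).fun_pow 2)).fun_sub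
    (diffAt_fst.fun_pow 2)), DD_sub (DifferentiableAt.fun_sum (fun i _ => (diffAt_coord i).fun_pow 2))
    (diffAt_fst.fun_pow 2), DD_sum (fun i => (diffAt_coord i).fun_pow 2), DD_sq diffAt_fst]
  have : ∀ i : Fin n, DD v (fun p : Spacetime n => p.2 i ^ 2) q = 2 * q.2 i * v.2 i := by
    intro i; rw [DD_sq (diffAt_coord i), DD_coord]
  simp only [this, DD_fst]
  have hs : ∑ x : Fin n, 2 * q.2 x * v.2 x = 2 * ∑ x : Fin n, q.2 x * v.2 x := by
    rw [Finset.mul_sum]; exact Finset.sum_congr rfl (fun i _ => by ring)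
  rw [hs]; ring

lemma DD_ff_e0 : DD (e0 n) (ff : Spacetime n → ℝ) q = -q.1 / 2 := by
  rw [DD_ff]; simp

lemma DD_ff_ex (j : Fin n) : DD (ex j) (ff : Spacetime n → ℝ) q = q.2 j / 2 := by
  rw [DD_ff]
  simp [ex_snd, mul_ite, Finset.sum_ite_eq]

lemma DD_DD_ff : DD w (fun p => DD v (ff : Spacetime n → ℝ) p) q
    = ((∑ i, w.2 i * v.2 i) - w.1 * v.1) / 2 := by
  have : (fun p => DD v (ff : Spacetime n → ℝ) p)
      = fun p : Spacetime n => ((∑ i, p.2 i * v.2 i) - p.1 * v.1) / 2 := by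
    funext p; exact DD_ff
  rw [this, DD_div_const ((DifferentiableAt.fun_sum fun i _ => (diffAt_coord i).mul_const (v.2 i)).fun_sub
      (diffAt_fst.mul_const v.1)),
    DD_sub (DifferentiableAt.fun_sum fun i _ => (diffAt_coord i).mul_const (v.2 i))
      (diffAt_fst.mul_const v.1),
    DD_sum (fun i => (diffAt_coord i).mul_const (v.2 i))]
  have h1 : ∀ i : Fin n, DD w (fun p : Spacetime n => p.2 i * v.2 i) q = w.2 i * v.2 i := by
    intro i
    rw [show (fun p : Spacetime n => p.2 i * v.2 i) = (fun p : Spacetime n => v.2 i * p.2 i) by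
      funext p; ring]
    rw [DD_const_mul (diffAt_coord i), DD_coord]; ring
  have h2 : DD w (fun p : Spacetime n => p.1 * v.1) q = w.1 * v.1 := by
    rw [show (fun p : Spacetime n => p.1 * v.1) = (fun p : Spacetime n => v.1 * p.1) by
      funext p; ring]
    rw [DD_const_mul diffAt_fst, DD_fst]; ring
  simp only [h1, h2]

lemma Sop_eq (φ : Spacetime n → ℝ) (p : Spacetime n) :
    Sop φ p = (1 / 2) * (p.1 * DD (e0 n) φ p + ∑ i, p.2 i * DD (ex i) φ p) := by
  rw [Sop, dr, dt_eq]
  rcases eq_or_ne (‖p.2‖) 0 with hz | hz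
  · have h2 : p.2 = 0 := norm_eq_zero.mp hz
    have : ∀ i : Fin n, p.2 i = 0 := by intro i; rw [h2]; rfl
    simp only [dx_eq, this, zero_mul, Finset.sum_const_zero, hz, zero_div, mul_zero, add_zero]
  · simp only [dx_eq]
    field_simp

lemma diffAt_DD_ff : DifferentiableAt ℝ (fun p : Spacetime n => DD v ff p) q := by
  rw [show (fun p : Spacetime n => DD v ff p)
      = fun p : Spacetime n => ((∑ i, p.2 i * v.2 i) - p.1 * v.1) / 2 from funext fun p => DD_ff]
  simp only [div_eq_mul_inv]
  exact ((DifferentiableAt.fun_sum fun i _ => (diffAt_coord i).mul_const _).sub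
    (diffAt_fst.mul_const _)).mul_const _

lemma Sop_eq' (φ : Spacetime n → ℝ) :
    Sop φ = fun p => (1 / 2) * (p.1 * DD (e0 n) φ p + ∑ i, p.2 i * DD (ex i) φ p) :=
  funext (Sop_eq φ)

lemma DD_DD (φ : Spacetime n → ℝ) (hΦ : DifferentiableAt ℝ (fderiv ℝ φ) q) :
    DD w (fun p => DD v φ p) q = fderiv ℝ (fderiv ℝ φ) q w v := by
  rw [show (fun p => DD v φ p) = fun p => (fderiv ℝ φ p) v from rfl]
  rw [DD, fderiv_clm_apply hΦ (differentiableAt_const v)]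
  simp

lemma diffAt_DD (φ : Spacetime n → ℝ) (hΦ : DifferentiableAt ℝ (fderiv ℝ φ) q) :
    DifferentiableAt ℝ (fun p => DD v φ p) q :=
  hΦ.clm_apply (differentiableAt_const v)

end Carleman
namespace Carleman

section Ffacts

lemma diffAt_of_contDiffOn {g : ℝ → ℝ} {s : ℝ} (hs : 0 < s)
    (hg : ContDiffOn ℝ (⊤ : ℕ∞) g (Set.Ioi 0)) : DifferentiableAt ℝ g s :=
  (hg.differentiableOn (by simp)).differentiableAt (isOpen_Ioi.mem_nhds hs)

lemma cd_deriv {g : ℝ → ℝ} (hg : ContDiffOn ℝ (⊤ : ℕ∞) g (Set.Ioi 0)) :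
    ContDiffOn ℝ (⊤ : ℕ∞) (deriv g) (Set.Ioi 0) :=
  hg.deriv_of_isOpen isOpen_Ioi (by simp)

variable {F : ℝ → ℝ} (hF : ContDiffOn ℝ (⊤ : ℕ∞) F (Set.Ioi 0)) {s0 : ℝ} (hs0 : 0 < s0)

include hF hs0

lemma diffF : DifferentiableAt ℝ F s0 := diffAt_of_contDiffOn hs0 hF
lemma diffF1 : DifferentiableAt ℝ (deriv F) s0 := diffAt_of_contDiffOn hs0 (cd_deriv hF)
lemma diffF2 : DifferentiableAt ℝ (deriv (deriv F)) s0 :=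
  diffAt_of_contDiffOn hs0 (cd_deriv (cd_deriv hF))

lemma GF_eventually : (GF F : ℝ → ℝ) =ᶠ[nhds s0]
    fun s => -(deriv F s + s * deriv (deriv F) s) := by
  filter_upwards [isOpen_Ioi.mem_nhds hs0] with s hs
  have hd : DifferentiableAt ℝ (deriv F) s := diffAt_of_contDiffOn hs (cd_deriv hF)
  rw [GF, deriv_fun_mul differentiableAt_fun_id hd]
  simp

lemma GF_val : GF F s0 = -(deriv F s0 + s0 * deriv (deriv F) s0) := by
  have := GF_eventually hF hs0
  exact this.eq_of_nhds

lemma diffGF : DifferentiableAt ℝ (GF F) s0 := by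
  have hrhs : DifferentiableAt ℝ (fun s => -(deriv F s + s * deriv (deriv F) s)) s0 :=
    ((diffF1 hF hs0).add (differentiableAt_fun_id.mul (diffF2 hF hs0))).neg
  exact (Filter.EventuallyEq.differentiableAt_iff (GF_eventually hF hs0)).mpr hrhs

lemma derivGF : deriv (GF F) s0 = -(2 * deriv (deriv F) s0 + s0 * deriv (deriv (deriv F)) s0) := by
  rw [Filter.EventuallyEq.deriv_eq (GF_eventually hF hs0)]
  rw [show (fun s => -(deriv F s + s * deriv (deriv F) s))
      = (fun s => -((fun u => deriv F u + u * deriv (deriv F) u) s)) from rfl, deriv.fun_neg]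
  rw [deriv_fun_add (diffF1 hF hs0) (differentiableAt_fun_id.fun_mul (diffF2 hF hs0))]
  rw [deriv_fun_mul differentiableAt_fun_id (diffF2 hF hs0)]
  simp
  ring

lemma HF_val : HF F s0 = (1 / 2) * (GF F s0 + s0 * deriv (GF F) s0) := by
  rw [HF, deriv_fun_mul differentiableAt_fun_id (diffGF hF hs0)]
  simp

end Ffacts

end Carleman
namespace Carleman

variable {n : ℕ}

/-- second fundamental bilinear form -/
def Hs (φ : Spacetime n → ℝ) (q a b : Spacetime n) : ℝ := fderiv ℝ (fderiv ℝ φ) q a b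

/-- generic component of the current -/
def Pgen (F : ℝ → ℝ) (U : Spacetime n × ℝ → ℝ) (φ : Spacetime n → ℝ) (v : Spacetime n)
    (q : Spacetime n) : ℝ :=
  Real.exp (-2 * F (ff q)) *
      (Sop φ q * DD v φ q - (1 / 2) * DD v ff q *
        (-(DD (e0 n) φ q) ^ 2 + ∑ i, (DD (ex i) φ q) ^ 2))
    + Real.exp (-2 * F (ff q)) * DD v ff q * U (q, φ q)
    + Real.exp (-2 * F (ff q)) * (((n : ℝ) - 1) / 4 - ff q * deriv F (ff q)) * φ q * DD v φ q
    + Real.exp (-2 * F (ff q)) *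
        ((ff q * deriv F (ff q) - ((n : ℝ) - 1) / 4) * deriv F (ff q) - (1 / 2) * GF F (ff q)) *
        DD v ff q * φ q ^ 2

lemma Pt_eq (F : ℝ → ℝ) (U : Spacetime n × ℝ → ℝ) (φ : Spacetime n → ℝ) :
    Pt F U φ = Pgen F U φ (e0 n) := rfl

lemma Px_eq (F : ℝ → ℝ) (U : Spacetime n × ℝ → ℝ) (φ : Spacetime n → ℝ) (j : Fin n) :
    Px F U φ j = Pgen F U φ (ex j) := rfl

lemma DD_Pgen (F : ℝ → ℝ) (hF : ContDiffOn ℝ (⊤ : ℕ∞) F (Set.Ioi 0))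
    (U : Spacetime n × ℝ → ℝ) (φ : Spacetime n → ℝ) (q v w : Spacetime n)
    (hffq : 0 < ff q)
    (hφ1 : DifferentiableAt ℝ φ q)
    (hΦ : DifferentiableAt ℝ (fderiv ℝ φ) q)
    (hU1 : DifferentiableAt ℝ (fun p => U (p, φ p)) q)
    (hUder : DD w (fun p => U (p, φ p)) q
      = DD w (fun p => U (p, φ q)) q + Udot U φ q * DD w φ q) :
    DD w (Pgen F U φ v) q =
      Real.exp (-2 * F (ff q)) * (-2 * deriv F (ff q) * DD w ff q) * (Sop φ q * DD v φ q - (1/2) * DD v ff q * (-(DD (e0 n) φ q) ^ 2 + ∑ i, (DD (ex i) φ q) ^ 2))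
      + Real.exp (-2 * F (ff q)) * (((1/2) * (w.1 * DD (e0 n) φ q + q.1 * Hs φ q w (e0 n) + ∑ i, (w.2 i * DD (ex i) φ q + q.2 i * Hs φ q w (ex i)))) * DD v φ q + Sop φ q * Hs φ q w v - (1/2) * (((∑ i, w.2 i * v.2 i) - w.1 * v.1) / 2) * (-(DD (e0 n) φ q) ^ 2 + ∑ i, (DD (ex i) φ q) ^ 2) - (1/2) * DD v ff q * (-(2 * DD (e0 n) φ q * Hs φ q w (e0 n)) + ∑ i, 2 * DD (ex i) φ q * Hs φ q w (ex i)))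
      + Real.exp (-2 * F (ff q)) * (-2 * deriv F (ff q) * DD w ff q) * DD v ff q * U (q, φ q)
      + Real.exp (-2 * F (ff q)) * (((∑ i, w.2 i * v.2 i) - w.1 * v.1) / 2) * U (q, φ q)
      + Real.exp (-2 * F (ff q)) * DD v ff q * (DD w (fun p => U (p, φ q)) q + Udot U φ q * DD w φ q)
      + Real.exp (-2 * F (ff q)) * (-2 * deriv F (ff q) * DD w ff q) * (((n:ℝ)-1)/4 - ff q * deriv F (ff q)) * φ q * DD v φ q
      + Real.exp (-2 * F (ff q)) * (-((deriv F (ff q) + ff q * deriv (deriv F) (ff q)) * DD w ff q)) * φ q * DD v φ q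
      + Real.exp (-2 * F (ff q)) * (((n:ℝ)-1)/4 - ff q * deriv F (ff q)) * (DD w φ q * DD v φ q + φ q * Hs φ q w v)
      + Real.exp (-2 * F (ff q)) * (-2 * deriv F (ff q) * DD w ff q) * ((ff q * deriv F (ff q) - ((n:ℝ)-1)/4) * deriv F (ff q) - (1/2) * GF F (ff q)) * DD v ff q * φ q ^ 2
      + Real.exp (-2 * F (ff q)) * (((deriv F (ff q) + ff q * deriv (deriv F) (ff q)) * deriv F (ff q) + (ff q * deriv F (ff q) - ((n:ℝ)-1)/4) * deriv (deriv F) (ff q) - (1/2) * deriv (GF F) (ff q)) * DD w ff q) * DD v ff q * φ q ^ 2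
      + Real.exp (-2 * F (ff q)) * ((ff q * deriv F (ff q) - ((n:ℝ)-1)/4) * deriv F (ff q) - (1/2) * GF F (ff q)) * (((∑ i, w.2 i * v.2 i) - w.1 * v.1) / 2) * φ q ^ 2
      + Real.exp (-2 * F (ff q)) * ((ff q * deriv F (ff q) - ((n:ℝ)-1)/4) * deriv F (ff q) - (1/2) * GF F (ff q)) * DD v ff q * (2 * φ q * DD w φ q) := by
  have hFd : DifferentiableAt ℝ F (ff q) := diffF hF hffq
  have hF1d : DifferentiableAt ℝ (deriv F) (ff q) := diffF1 hF hffq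
  have hGd : DifferentiableAt ℝ (GF F) (ff q) := diffGF hF hffq
  -- exponential factor
  have hgE : HasDerivAt (fun s => Real.exp (-2 * F s))
      (Real.exp (-2 * F (ff q)) * (-2 * deriv F (ff q))) (ff q) :=
    (hFd.hasDerivAt.const_mul (-2)).exp
  have hEdiff : DifferentiableAt ℝ (fun p : Spacetime n => Real.exp (-2 * F (ff p))) q :=
    hgE.differentiableAt.comp q diffAt_ff
  have hED : DD w (fun p : Spacetime n => Real.exp (-2 * F (ff p))) q
      = Real.exp (-2 * F (ff q)) * (-2 * deriv F (ff q)) * DD w ff q := by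
    rw [DD_comp hgE.differentiableAt diffAt_ff, hgE.deriv]
  -- first derivatives of φ
  have hcdiff : ∀ u : Spacetime n, DifferentiableAt ℝ (fun p => DD u φ p) q :=
    fun u => diffAt_DD φ hΦ
  have hcD : ∀ u₁ u₂ : Spacetime n, DD u₁ (fun p => DD u₂ φ p) q = Hs φ q u₁ u₂ :=
    fun u₁ u₂ => DD_DD φ hΦ
  -- Sop
  have hSopdiff : DifferentiableAt ℝ (Sop φ) q := by
    rw [Sop_eq' φ]
    exact ((diffAt_fst.fun_mul (hcdiff _)).fun_add
      (DifferentiableAt.fun_sum fun i _ => (diffAt_coord i).fun_mul (hcdiff _))).const_mul (1/2)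
  have hSD : DD w (Sop φ) q = (1/2) * (w.1 * DD (e0 n) φ q + q.1 * Hs φ q w (e0 n)
      + ∑ i, (w.2 i * DD (ex i) φ q + q.2 i * Hs φ q w (ex i))) := by
    rw [Sop_eq' φ, DD_const_mul ((diffAt_fst.fun_mul (hcdiff _)).fun_add
      (DifferentiableAt.fun_sum fun i _ => (diffAt_coord i).fun_mul (hcdiff _))) (1/2),
      DD_add (diffAt_fst.fun_mul (hcdiff _))
        (DifferentiableAt.fun_sum fun i _ => (diffAt_coord i).fun_mul (hcdiff _)),
      DD_mul diffAt_fst (hcdiff _), DD_fst,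
      DD_sum (fun i => (diffAt_coord i).fun_mul (hcdiff _))]
    have hi : ∀ i : Fin n, DD w (fun p : Spacetime n => p.2 i * DD (ex i) φ p) q
        = w.2 i * DD (ex i) φ q + q.2 i * Hs φ q w (ex i) := by
      intro i
      rw [DD_mul (diffAt_coord i) (hcdiff _), DD_coord, hcD]
    rw [Finset.sum_congr rfl (fun i _ => hi i), hcD]
  -- K
  have hKdiff : DifferentiableAt ℝ
      (fun p => -(DD (e0 n) φ p) ^ 2 + ∑ i, (DD (ex i) φ p) ^ 2) q :=
    (((hcdiff _).fun_pow 2).fun_neg).fun_add (DifferentiableAt.fun_sum fun i _ => (hcdiff _).fun_pow 2)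
  have hKD : DD w (fun p => -(DD (e0 n) φ p) ^ 2 + ∑ i, (DD (ex i) φ p) ^ 2) q
      = -(2 * DD (e0 n) φ q * Hs φ q w (e0 n)) + ∑ i, 2 * DD (ex i) φ q * Hs φ q w (ex i) := by
    rw [DD_add (((hcdiff _).fun_pow 2).fun_neg) (DifferentiableAt.fun_sum fun i _ => (hcdiff _).fun_pow 2),
      DD_neg, DD_sq (hcdiff _), hcD,
      DD_sum (fun i => (hcdiff _).fun_pow 2)]
    have hi : ∀ i : Fin n, DD w (fun p => (DD (ex i) φ p) ^ 2) q
        = 2 * DD (ex i) φ q * Hs φ q w (ex i) := by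
      intro i; rw [DD_sq (hcdiff _), hcD]
    rw [Finset.sum_congr rfl (fun i _ => hi i)]
  -- c1 coefficient
  have hg1 : HasDerivAt (fun s : ℝ => ((n : ℝ) - 1) / 4 - s * deriv F s)
      (-(deriv F (ff q) + ff q * deriv (deriv F) (ff q))) (ff q) := by
    have h1 : HasDerivAt (fun s : ℝ => s * deriv F s)
        (1 * deriv F (ff q) + ff q * deriv (deriv F) (ff q)) (ff q) :=
      (hasDerivAt_id _).mul hF1d.hasDerivAt
    have h2 := h1.const_sub (((n : ℝ) - 1) / 4)
    exact h2.congr_deriv (by ring)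
  have hc1diff : DifferentiableAt ℝ
      (fun p : Spacetime n => ((n : ℝ) - 1) / 4 - ff p * deriv F (ff p)) q :=
    hg1.differentiableAt.comp q diffAt_ff
  have hc1D : DD w (fun p : Spacetime n => ((n : ℝ) - 1) / 4 - ff p * deriv F (ff p)) q
      = -(deriv F (ff q) + ff q * deriv (deriv F) (ff q)) * DD w ff q := by
    rw [DD_comp hg1.differentiableAt diffAt_ff, hg1.deriv]
  -- c2 coefficient
  have hg2 : HasDerivAt (fun s : ℝ =>
        (s * deriv F s - ((n : ℝ) - 1) / 4) * deriv F s - 1 / 2 * GF F s)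
      ((deriv F (ff q) + ff q * deriv (deriv F) (ff q)) * deriv F (ff q)
        + (ff q * deriv F (ff q) - ((n : ℝ) - 1) / 4) * deriv (deriv F) (ff q)
        - 1 / 2 * deriv (GF F) (ff q)) (ff q) := by
    have h1 : HasDerivAt (fun s : ℝ => s * deriv F s)
        (1 * deriv F (ff q) + ff q * deriv (deriv F) (ff q)) (ff q) :=
      (hasDerivAt_id _).mul hF1d.hasDerivAt
    have h2 := (h1.sub_const (((n : ℝ) - 1) / 4)).mul hF1d.hasDerivAt
    have h3 := hGd.hasDerivAt.const_mul (1/2 : ℝ)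
    have h4 := h2.sub h3
    exact h4.congr_deriv (by ring)
  have hc2diff : DifferentiableAt ℝ (fun p : Spacetime n =>
      (ff p * deriv F (ff p) - ((n : ℝ) - 1) / 4) * deriv F (ff p) - 1 / 2 * GF F (ff p)) q :=
    hg2.differentiableAt.comp q diffAt_ff
  have hc2D : DD w (fun p : Spacetime n =>
        (ff p * deriv F (ff p) - ((n : ℝ) - 1) / 4) * deriv F (ff p) - 1 / 2 * GF F (ff p)) q
      = ((deriv F (ff q) + ff q * deriv (deriv F) (ff q)) * deriv F (ff q)
        + (ff q * deriv F (ff q) - ((n : ℝ) - 1) / 4) * deriv (deriv F) (ff q)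
        - 1 / 2 * deriv (GF F) (ff q)) * DD w ff q := by
    rw [DD_comp hg2.differentiableAt diffAt_ff, hg2.deriv]
  -- structure of Pgen
  have hstruct : Pgen F U φ v = fun p : Spacetime n =>
      Real.exp (-2 * F (ff p)) *
        (Sop φ p * DD v φ p - (1 / 2) * DD v ff p *
          (-(DD (e0 n) φ p) ^ 2 + ∑ i, (DD (ex i) φ p) ^ 2))
      + Real.exp (-2 * F (ff p)) * DD v ff p * U (p, φ p)
      + Real.exp (-2 * F (ff p)) * (((n : ℝ) - 1) / 4 - ff p * deriv F (ff p)) * φ p * DD v φ p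
      + Real.exp (-2 * F (ff p)) *
          ((ff p * deriv F (ff p) - ((n : ℝ) - 1) / 4) * deriv F (ff p) - 1 / 2 * GF F (ff p)) *
          DD v ff p * φ p ^ 2 := rfl
  have hd1 : DifferentiableAt ℝ (fun p : Spacetime n =>
      Real.exp (-2 * F (ff p)) *
        (Sop φ p * DD v φ p - (1 / 2) * DD v ff p *
          (-(DD (e0 n) φ p) ^ 2 + ∑ i, (DD (ex i) φ p) ^ 2))) q :=
    hEdiff.mul ((hSopdiff.mul (hcdiff v)).sub ((diffAt_DD_ff.const_mul (1/2)).mul hKdiff))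
  have hd2 : DifferentiableAt ℝ
      (fun p : Spacetime n => Real.exp (-2 * F (ff p)) * DD v ff p * U (p, φ p)) q :=
    (hEdiff.mul diffAt_DD_ff).mul hU1
  have hd3 : DifferentiableAt ℝ (fun p : Spacetime n =>
      Real.exp (-2 * F (ff p)) * (((n : ℝ) - 1) / 4 - ff p * deriv F (ff p)) * φ p
        * DD v φ p) q :=
    ((hEdiff.mul hc1diff).mul hφ1).mul (hcdiff v)
  have hd4 : DifferentiableAt ℝ (fun p : Spacetime n =>
      Real.exp (-2 * F (ff p)) *
        ((ff p * deriv F (ff p) - ((n : ℝ) - 1) / 4) * deriv F (ff p) - 1 / 2 * GF F (ff p)) *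
        DD v ff p * φ p ^ 2) q :=
    ((hEdiff.mul hc2diff).mul diffAt_DD_ff).mul (hφ1.pow 2)
  rw [hstruct]
  rw [DD_add ((hd1.fun_add hd2).fun_add hd3) hd4, DD_add (hd1.fun_add hd2) hd3, DD_add hd1 hd2]
  rw [DD_mul hEdiff ((hSopdiff.fun_mul (hcdiff v)).fun_sub
      ((diffAt_DD_ff.const_mul (1/2)).fun_mul hKdiff)),
    DD_sub (hSopdiff.fun_mul (hcdiff v)) ((diffAt_DD_ff.const_mul (1/2)).fun_mul hKdiff),
    DD_mul hSopdiff (hcdiff v),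
    DD_mul (diffAt_DD_ff.const_mul (1/2)) hKdiff,
    DD_const_mul diffAt_DD_ff (1/2)]
  rw [DD_mul (hEdiff.fun_mul diffAt_DD_ff) hU1, DD_mul hEdiff diffAt_DD_ff]
  rw [DD_mul ((hEdiff.fun_mul hc1diff).fun_mul hφ1) (hcdiff v),
    DD_mul (hEdiff.fun_mul hc1diff) hφ1, DD_mul hEdiff hc1diff]
  rw [DD_mul ((hEdiff.fun_mul hc2diff).fun_mul diffAt_DD_ff) (hφ1.fun_pow 2),
    DD_mul (hEdiff.fun_mul hc2diff) diffAt_DD_ff, DD_mul hEdiff hc2diff,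
    DD_sq hφ1]
  rw [hED, hSD, hKD, hc1D, hc2D, hcD, hUder, DD_DD_ff]
  ring

end Carleman
namespace Carleman

variable {n : ℕ}

lemma sum_e0_zero (g : Fin n → ℝ) : (∑ i, (e0 n).2 i * g i) = 0 := by
  simp

lemma DD_Pgen_e0 (F : ℝ → ℝ) (hF : ContDiffOn ℝ (⊤ : ℕ∞) F (Set.Ioi 0))
    (U : Spacetime n × ℝ → ℝ) (φ : Spacetime n → ℝ) (q : Spacetime n)
    (hffq : 0 < ff q)
    (hφ1 : DifferentiableAt ℝ φ q)
    (hΦ : DifferentiableAt ℝ (fderiv ℝ φ) q)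
    (hU1 : DifferentiableAt ℝ (fun p => U (p, φ p)) q)
    (hUder : DD (e0 n) (fun p => U (p, φ p)) q
      = DD (e0 n) (fun p => U (p, φ q)) q + Udot U φ q * DD (e0 n) φ q) :
    DD (e0 n) (Pgen F U φ (e0 n)) q =
      Real.exp (-2 * F (ff q)) * (deriv F (ff q) * q.1) *
          (Sop φ q * DD (e0 n) φ q
            + (q.1 / 4) * (-(DD (e0 n) φ q) ^ 2 + ∑ i, (DD (ex i) φ q) ^ 2))
      + Real.exp (-2 * F (ff q)) *
          ((1/2) * (DD (e0 n) φ q + q.1 * Hs φ q (e0 n) (e0 n)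
              + ∑ i, q.2 i * Hs φ q (e0 n) (ex i)) * DD (e0 n) φ q
            + Sop φ q * Hs φ q (e0 n) (e0 n)
            + (-(DD (e0 n) φ q) ^ 2 + ∑ i, (DD (ex i) φ q) ^ 2) / 4
            + (q.1 / 4) * (-(2 * DD (e0 n) φ q * Hs φ q (e0 n) (e0 n))
                + ∑ i, 2 * DD (ex i) φ q * Hs φ q (e0 n) (ex i)))
      - Real.exp (-2 * F (ff q)) * (deriv F (ff q) * U (q, φ q) / 2) * q.1 ^ 2
      - Real.exp (-2 * F (ff q)) * U (q, φ q) / 2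
      - Real.exp (-2 * F (ff q)) * (q.1 / 2) *
          (DD (e0 n) (fun p => U (p, φ q)) q + Udot U φ q * DD (e0 n) φ q)
      + Real.exp (-2 * F (ff q)) * (deriv F (ff q) * q.1) *
          (((n : ℝ) - 1) / 4 - ff q * deriv F (ff q)) * φ q * DD (e0 n) φ q
      + Real.exp (-2 * F (ff q)) *
          ((deriv F (ff q) + ff q * deriv (deriv F) (ff q)) * q.1 / 2) * φ q * DD (e0 n) φ q
      + Real.exp (-2 * F (ff q)) * (((n : ℝ) - 1) / 4 - ff q * deriv F (ff q)) *
          (DD (e0 n) φ q * DD (e0 n) φ q + φ q * Hs φ q (e0 n) (e0 n))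
      - Real.exp (-2 * F (ff q)) * (deriv F (ff q) *
          ((ff q * deriv F (ff q) - ((n : ℝ) - 1) / 4) * deriv F (ff q)
            - (1/2) * GF F (ff q)) / 2) * φ q ^ 2 * q.1 ^ 2
      + Real.exp (-2 * F (ff q)) *
          (((deriv F (ff q) + ff q * deriv (deriv F) (ff q)) * deriv F (ff q)
            + (ff q * deriv F (ff q) - ((n : ℝ) - 1) / 4) * deriv (deriv F) (ff q)
            - (1/2) * deriv (GF F) (ff q)) / 4) * φ q ^ 2 * q.1 ^ 2
      - Real.exp (-2 * F (ff q)) *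
          ((ff q * deriv F (ff q) - ((n : ℝ) - 1) / 4) * deriv F (ff q)
            - (1/2) * GF F (ff q)) * φ q ^ 2 / 2
      - Real.exp (-2 * F (ff q)) *
          ((ff q * deriv F (ff q) - ((n : ℝ) - 1) / 4) * deriv F (ff q)
            - (1/2) * GF F (ff q)) * q.1 * φ q * DD (e0 n) φ q := by
  rw [DD_Pgen F hF U φ q (e0 n) (e0 n) hffq hφ1 hΦ hU1 hUder]
  rw [DD_ff_e0]
  simp only [e0_fst, e0_snd, zero_mul, mul_zero, Finset.sum_const_zero, zero_add, add_zero]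
  ring

lemma DD_Pgen_ex (F : ℝ → ℝ) (hF : ContDiffOn ℝ (⊤ : ℕ∞) F (Set.Ioi 0))
    (U : Spacetime n × ℝ → ℝ) (φ : Spacetime n → ℝ) (q : Spacetime n) (j : Fin n)
    (hffq : 0 < ff q)
    (hφ1 : DifferentiableAt ℝ φ q)
    (hΦ : DifferentiableAt ℝ (fderiv ℝ φ) q)
    (hU1 : DifferentiableAt ℝ (fun p => U (p, φ p)) q)
    (hUder : DD (ex j) (fun p => U (p, φ p)) q
      = DD (ex j) (fun p => U (p, φ q)) q + Udot U φ q * DD (ex j) φ q)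
    (hsymm : ∀ a b : Spacetime n, Hs φ q a b = Hs φ q b a) :
    DD (ex j) (Pgen F U φ (ex j)) q =
      (Real.exp (-2 * F (ff q)) * (deriv F (ff q) *
          (-(DD (e0 n) φ q) ^ 2 + ∑ i, (DD (ex i) φ q) ^ 2) / 4)
        - Real.exp (-2 * F (ff q)) * (deriv F (ff q) * U (q, φ q) / 2)
        - Real.exp (-2 * F (ff q)) * (deriv F (ff q) *
            ((ff q * deriv F (ff q) - ((n : ℝ) - 1) / 4) * deriv F (ff q)
              - (1/2) * GF F (ff q)) / 2) * φ q ^ 2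
        + Real.exp (-2 * F (ff q)) *
            (((deriv F (ff q) + ff q * deriv (deriv F) (ff q)) * deriv F (ff q)
              + (ff q * deriv F (ff q) - ((n : ℝ) - 1) / 4) * deriv (deriv F) (ff q)
              - (1/2) * deriv (GF F) (ff q)) / 4) * φ q ^ 2) * (q.2 j * q.2 j)
      + (-(Real.exp (-2 * F (ff q)) * deriv F (ff q) * Sop φ q)
          + Real.exp (-2 * F (ff q)) * Udot U φ q / 2
          - Real.exp (-2 * F (ff q)) * deriv F (ff q) *
              (((n : ℝ) - 1) / 4 - ff q * deriv F (ff q)) * φ q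
          - Real.exp (-2 * F (ff q)) *
              (deriv F (ff q) + ff q * deriv (deriv F) (ff q)) * φ q / 2
          + Real.exp (-2 * F (ff q)) *
              ((ff q * deriv F (ff q) - ((n : ℝ) - 1) / 4) * deriv F (ff q)
                - (1/2) * GF F (ff q)) * φ q) * (q.2 j * DD (ex j) φ q)
      + (Real.exp (-2 * F (ff q)) / 2
          + Real.exp (-2 * F (ff q)) * (((n : ℝ) - 1) / 4 - ff q * deriv F (ff q)))
          * (DD (ex j) φ q * DD (ex j) φ q)
      + (Real.exp (-2 * F (ff q)) * q.1 / 2) * (DD (ex j) φ q * Hs φ q (e0 n) (ex j))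
      + (Real.exp (-2 * F (ff q)) * DD (e0 n) φ q / 2) * (q.2 j * Hs φ q (e0 n) (ex j))
      + (Real.exp (-2 * F (ff q)) / 2) *
          (DD (ex j) φ q * ∑ i, q.2 i * Hs φ q (ex j) (ex i))
      + (-(Real.exp (-2 * F (ff q)) / 4)) *
          (q.2 j * ∑ i, 2 * DD (ex i) φ q * Hs φ q (ex j) (ex i))
      + (Real.exp (-2 * F (ff q)) * Sop φ q
          + Real.exp (-2 * F (ff q)) * (((n : ℝ) - 1) / 4 - ff q * deriv F (ff q)) * φ q)
          * Hs φ q (ex j) (ex j)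
      + (Real.exp (-2 * F (ff q)) / 2) * (q.2 j * DD (ex j) (fun p => U (p, φ q)) q)
      + (-(Real.exp (-2 * F (ff q)) *
            (-(DD (e0 n) φ q) ^ 2 + ∑ i, (DD (ex i) φ q) ^ 2) / 4)
          + Real.exp (-2 * F (ff q)) * U (q, φ q) / 2
          + Real.exp (-2 * F (ff q)) *
              ((ff q * deriv F (ff q) - ((n : ℝ) - 1) / 4) * deriv F (ff q)
                - (1/2) * GF F (ff q)) * φ q ^ 2 / 2) := by
  rw [DD_Pgen F hF U φ q (ex j) (ex j) hffq hφ1 hΦ hU1 hUder]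
  rw [DD_ff_ex]
  rw [hsymm (ex j) (e0 n)]
  have hdd : (∑ i, (ex j).2 i * (ex j).2 i) = 1 := by
    simp [ex_snd, Finset.sum_ite_eq']
  have hds : (∑ i, ((ex j).2 i * DD (ex i) φ q + q.2 i * Hs φ q (ex j) (ex i)))
      = DD (ex j) φ q + ∑ i, q.2 i * Hs φ q (ex j) (ex i) := by
    rw [Finset.sum_add_distrib]
    congr 1
    simp [ex_snd, ite_mul, Finset.sum_ite_eq']
  rw [hdd, hds]
  simp only [ex_fst, mul_zero, zero_mul, sub_zero, add_zero]
  ring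

end Carleman
namespace Carleman

variable {n : ℕ}

lemma swap_sum (φ : Spacetime n → ℝ) (q : Spacetime n)
    (hsymm : ∀ a b : Spacetime n, Hs φ q a b = Hs φ q b a) :
    ∑ j, q.2 j * ∑ i, 2 * DD (ex i) φ q * Hs φ q (ex j) (ex i)
      = 2 * ∑ j, DD (ex j) φ q * ∑ i, q.2 i * Hs φ q (ex j) (ex i) := by
  have h1 : ∀ j : Fin n, q.2 j * ∑ i, 2 * DD (ex i) φ q * Hs φ q (ex j) (ex i)
      = ∑ i, 2 * (DD (ex i) φ q * (q.2 j * Hs φ q (ex i) (ex j))) := by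
    intro j
    rw [Finset.mul_sum]
    exact Finset.sum_congr rfl fun i _ => by rw [hsymm (ex j) (ex i)]; ring
  rw [Finset.sum_congr rfl (fun j _ => h1 j), Finset.sum_comm, Finset.mul_sum]
  refine Finset.sum_congr rfl fun i _ => ?_
  rw [Finset.mul_sum, Finset.mul_sum]

lemma sum_Pgen_ex (F : ℝ → ℝ) (hF : ContDiffOn ℝ (⊤ : ℕ∞) F (Set.Ioi 0))
    (U : Spacetime n × ℝ → ℝ) (φ : Spacetime n → ℝ) (q : Spacetime n)
    (hffq : 0 < ff q)
    (hφ1 : DifferentiableAt ℝ φ q)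
    (hΦ : DifferentiableAt ℝ (fderiv ℝ φ) q)
    (hU1 : DifferentiableAt ℝ (fun p => U (p, φ p)) q)
    (hUder : ∀ j : Fin n, DD (ex j) (fun p => U (p, φ p)) q
      = DD (ex j) (fun p => U (p, φ q)) q + Udot U φ q * DD (ex j) φ q)
    (hsymm : ∀ a b : Spacetime n, Hs φ q a b = Hs φ q b a) :
    ∑ j, DD (ex j) (Pgen F U φ (ex j)) q =
      (Real.exp (-2 * F (ff q)) * (deriv F (ff q) *
          (-(DD (e0 n) φ q) ^ 2 + ∑ i, (DD (ex i) φ q) ^ 2) / 4)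
        - Real.exp (-2 * F (ff q)) * (deriv F (ff q) * U (q, φ q) / 2)
        - Real.exp (-2 * F (ff q)) * (deriv F (ff q) *
            ((ff q * deriv F (ff q) - ((n : ℝ) - 1) / 4) * deriv F (ff q)
              - (1/2) * GF F (ff q)) / 2) * φ q ^ 2
        + Real.exp (-2 * F (ff q)) *
            (((deriv F (ff q) + ff q * deriv (deriv F) (ff q)) * deriv F (ff q)
              + (ff q * deriv F (ff q) - ((n : ℝ) - 1) / 4) * deriv (deriv F) (ff q)
              - (1/2) * deriv (GF F) (ff q)) / 4) * φ q ^ 2) * (∑ i, q.2 i ^ 2)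
      + (-(Real.exp (-2 * F (ff q)) * deriv F (ff q) * Sop φ q)
          + Real.exp (-2 * F (ff q)) * Udot U φ q / 2
          - Real.exp (-2 * F (ff q)) * deriv F (ff q) *
              (((n : ℝ) - 1) / 4 - ff q * deriv F (ff q)) * φ q
          - Real.exp (-2 * F (ff q)) *
              (deriv F (ff q) + ff q * deriv (deriv F) (ff q)) * φ q / 2
          + Real.exp (-2 * F (ff q)) *
              ((ff q * deriv F (ff q) - ((n : ℝ) - 1) / 4) * deriv F (ff q)
                - (1/2) * GF F (ff q)) * φ q) * (∑ j, q.2 j * DD (ex j) φ q)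
      + (Real.exp (-2 * F (ff q)) / 2
          + Real.exp (-2 * F (ff q)) * (((n : ℝ) - 1) / 4 - ff q * deriv F (ff q)))
          * (∑ j, (DD (ex j) φ q) ^ 2)
      + (Real.exp (-2 * F (ff q)) * q.1 / 2) *
          (∑ j, DD (ex j) φ q * Hs φ q (e0 n) (ex j))
      + (Real.exp (-2 * F (ff q)) * DD (e0 n) φ q / 2) *
          (∑ j, q.2 j * Hs φ q (e0 n) (ex j))
      + (Real.exp (-2 * F (ff q)) / 2) *
          (∑ j, DD (ex j) φ q * ∑ i, q.2 i * Hs φ q (ex j) (ex i))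
      + (-(Real.exp (-2 * F (ff q)) / 4)) *
          (2 * ∑ j, DD (ex j) φ q * ∑ i, q.2 i * Hs φ q (ex j) (ex i))
      + (Real.exp (-2 * F (ff q)) * Sop φ q
          + Real.exp (-2 * F (ff q)) * (((n : ℝ) - 1) / 4 - ff q * deriv F (ff q)) * φ q)
          * (∑ j, Hs φ q (ex j) (ex j))
      + (Real.exp (-2 * F (ff q)) / 2) *
          (∑ j, q.2 j * DD (ex j) (fun p => U (p, φ q)) q)
      + (n : ℝ) * (-(Real.exp (-2 * F (ff q)) *
            (-(DD (e0 n) φ q) ^ 2 + ∑ i, (DD (ex i) φ q) ^ 2) / 4)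
          + Real.exp (-2 * F (ff q)) * U (q, φ q) / 2
          + Real.exp (-2 * F (ff q)) *
              ((ff q * deriv F (ff q) - ((n : ℝ) - 1) / 4) * deriv F (ff q)
                - (1/2) * GF F (ff q)) * φ q ^ 2 / 2) := by
  rw [Finset.sum_congr rfl
    (fun j _ => DD_Pgen_ex F hF U φ q j hffq hφ1 hΦ hU1 (hUder j) hsymm)]
  simp only [Finset.sum_add_distrib, ← Finset.mul_sum, Finset.sum_const, Finset.card_univ,
    Fintype.card_fin, nsmul_eq_mul]
  rw [swap_sum φ q hsymm]
  have hXX : ∑ j, q.2 j * q.2 j = ∑ i, q.2 i ^ 2 :=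
    Finset.sum_congr rfl fun i _ => by ring
  have hcc : ∑ j, DD (ex j) φ q * DD (ex j) φ q = ∑ j, (DD (ex j) φ q) ^ 2 :=
    Finset.sum_congr rfl fun i _ => by ring
  rw [hXX, hcc]
  ring

end Carleman
open Carleman

/-- **Lemma 2.9** (the main Carleman identity): with `ψ = e^{−F(f)}φ` and
`L = e^{−F(f)}(□φ + U̇(φ))`, everywhere on `D`,
`L·S_*ψ = 2F'(f)(S_*ψ)² + (f F'(f) G_F(f) + H_F(f)) ψ² + B + div_g P`. -/
theorem carleman_identity (n : ℕ) (hn : 2 ≤ n)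
    (F : ℝ → ℝ) (hF : ContDiffOn ℝ (⊤ : ℕ∞) F (Set.Ioi 0))
    (U : Spacetime n × ℝ → ℝ)
    (hU : ContDiffOn ℝ 1 U ((Dom n) ×ˢ (Set.univ : Set ℝ)))
    (φ : Spacetime n → ℝ) (hφ : ContDiffOn ℝ 2 φ (Dom n)) :
    ∀ q ∈ Dom n,
      (Real.exp (-(F (ff q))) * (box φ q + Udot U φ q)) *
          Sstar (fun p => Real.exp (-(F (ff p))) * φ p) q =
        2 * deriv F (ff q) * (Sstar (fun p => Real.exp (-(F (ff p))) * φ p) q) ^ 2 +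
          (ff q * deriv F (ff q) * GF F (ff q) + HF F (ff q)) *
            (Real.exp (-(F (ff q))) * φ q) ^ 2 +
          Bulk F U φ q + divP F U φ q := by
  intro q hq
  -- openness and basic point facts
  have hDom : IsOpen (Dom n) := isOpen_lt continuous_fst.abs continuous_snd.norm
  have hmem : Dom n ∈ nhds q := hDom.mem_nhds hq
  have habs : |q.1| < ‖q.2‖ := hq
  have hffq : 0 < ff q := by
    rw [ff]
    nlinarith [sq_abs q.1, abs_nonneg q.1, norm_nonneg q.2]
  -- φ facts
  have hφq : ContDiffAt ℝ 2 φ q := hφ.contDiffAt hmem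
  have hφ1 : DifferentiableAt ℝ φ q := hφq.differentiableAt (by norm_num)
  have hΦ : DifferentiableAt ℝ (fderiv ℝ φ) q :=
    (hφq.fderiv_right (m := 1) (by norm_num)).differentiableAt (by norm_num)
  have hsymm : ∀ a b : Spacetime n, Hs φ q a b = Hs φ q b a :=
    fun a b => hφq.isSymmSndFDerivAt (by norm_num) a b
  -- U facts
  have hUopen : IsOpen ((Dom n) ×ˢ (Set.univ : Set ℝ)) := hDom.prod isOpen_univ
  have hUat : DifferentiableAt ℝ U (q, φ q) :=
    (hU.differentiableOn (by simp)).differentiableAt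
      (hUopen.mem_nhds ⟨hq, Set.mem_univ _⟩)
  have hG : HasFDerivAt (fun p : Spacetime n => (p, φ p))
      ((ContinuousLinearMap.id ℝ (Spacetime n)).prod (fderiv ℝ φ q)) q :=
    (hasFDerivAt_id q).prodMk hφ1.hasFDerivAt
  have hUcomp : HasFDerivAt (fun p : Spacetime n => U (p, φ p))
      ((fderiv ℝ U (q, φ q)).comp
        ((ContinuousLinearMap.id ℝ (Spacetime n)).prod (fderiv ℝ φ q))) q :=
    hUat.hasFDerivAt.comp q hG
  have hU1 : DifferentiableAt ℝ (fun p : Spacetime n => U (p, φ p)) q :=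
    hUcomp.differentiableAt
  have hUdot : Udot U φ q = fderiv ℝ U (q, φ q) (0, 1) := by
    have hy : HasFDerivAt (fun y : ℝ => ((q, y) : Spacetime n × ℝ))
        ((0 : ℝ →L[ℝ] Spacetime n).prod (ContinuousLinearMap.id ℝ ℝ)) (φ q) :=
      (hasFDerivAt_const q _).prodMk (hasFDerivAt_id _)
    have hcomp : HasDerivAt (fun y : ℝ => U (q, y))
        (((fderiv ℝ U (q, φ q)).comp
          ((0 : ℝ →L[ℝ] Spacetime n).prod (ContinuousLinearMap.id ℝ ℝ))) 1) (φ q) :=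
      (hUat.hasFDerivAt.comp (φ q) hy).hasDerivAt
    rw [Udot, hcomp.deriv]
    simp
  have hUder : ∀ w : Spacetime n, DD w (fun p : Spacetime n => U (p, φ p)) q
      = DD w (fun p : Spacetime n => U (p, φ q)) q + Udot U φ q * DD w φ q := by
    intro w
    have h1 : DD w (fun p : Spacetime n => U (p, φ p)) q
        = fderiv ℝ U (q, φ q) (w, fderiv ℝ φ q w) := by
      rw [DD, hUcomp.fderiv]; rfl
    have hGc : HasFDerivAt (fun p : Spacetime n => ((p, φ q) : Spacetime n × ℝ))
        ((ContinuousLinearMap.id ℝ (Spacetime n)).prod 0) q :=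
      (hasFDerivAt_id q).prodMk (hasFDerivAt_const _ _)
    have hGc' : HasFDerivAt (fun p : Spacetime n => U (p, φ q))
        ((fderiv ℝ U (q, φ q)).comp
          ((ContinuousLinearMap.id ℝ (Spacetime n)).prod 0)) q :=
      hUat.hasFDerivAt.comp q hGc
    have h2 : DD w (fun p : Spacetime n => U (p, φ q)) q
        = fderiv ℝ U (q, φ q) (w, 0) := by
      rw [DD, hGc'.fderiv]; rfl
    have h3 : ((w, fderiv ℝ φ q w) : Spacetime n × ℝ)
        = (w, (0 : ℝ)) + fderiv ℝ φ q w • (((0 : Spacetime n), (1 : ℝ))) := by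
      simp
    rw [h1, h3, map_add, ContinuousLinearMap.map_smul, h2, hUdot, smul_eq_mul, DD]
    ring
  -- box
  have hbox : box φ q = -(Hs φ q (e0 n) (e0 n)) + ∑ i, Hs φ q (ex i) (ex i) := by
    have h1 : dt (dt φ) q = Hs φ q (e0 n) (e0 n) := DD_DD φ hΦ
    have h2 : ∀ i : Fin n, dx i (dx i φ) q = Hs φ q (ex i) (ex i) := fun i => DD_DD φ hΦ
    rw [box, h1, Finset.sum_congr rfl fun i _ => h2 i]
  -- ψ = e^{-F(f)} φ : first derivatives and Sstar
  have hgE1 : HasDerivAt (fun s : ℝ => Real.exp (-(F s)))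
      (Real.exp (-(F (ff q))) * -deriv F (ff q)) (ff q) :=
    ((diffF hF hffq).hasDerivAt.neg).exp
  have hψd : ∀ u : Spacetime n,
      DD u (fun p : Spacetime n => Real.exp (-(F (ff p))) * φ p) q
      = Real.exp (-(F (ff q))) * -deriv F (ff q) * DD u ff q * φ q
        + Real.exp (-(F (ff q))) * DD u φ q := by
    intro u
    have hE1diff : DifferentiableAt ℝ (fun p : Spacetime n => Real.exp (-(F (ff p)))) q :=
      hgE1.differentiableAt.comp q diffAt_ff
    rw [DD_mul hE1diff hφ1, DD_comp hgE1.differentiableAt diffAt_ff, hgE1.deriv]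
  have hSst : Sstar (fun p : Spacetime n => Real.exp (-(F (ff p))) * φ p) q
      = Real.exp (-(F (ff q))) * (Sop φ q - deriv F (ff q) * ff q * φ q
          + (((n : ℝ) - 1) / 4) * φ q) := by
    rw [Sstar, Sop_eq _ q, hψd (e0 n), DD_ff_e0,
      Finset.sum_congr rfl (fun i _ => by rw [hψd (ex i), DD_ff_ex])]
    have hsplit : ∑ i, q.2 i * (Real.exp (-(F (ff q))) * -deriv F (ff q) * (q.2 i / 2) * φ q
        + Real.exp (-(F (ff q))) * DD (ex i) φ q)
        = (Real.exp (-(F (ff q))) * -deriv F (ff q) * φ q / 2) * (∑ i, q.2 i ^ 2)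
          + Real.exp (-(F (ff q))) * ∑ i, q.2 i * DD (ex i) φ q := by
      rw [Finset.mul_sum, Finset.mul_sum, ← Finset.sum_add_distrib]
      exact Finset.sum_congr rfl fun i _ => by ring
    rw [hsplit, Sop_eq φ q, ff_eq q]
    ring
  -- divergence
  have hdivP : divP F U φ q = -(DD (e0 n) (Pgen F U φ (e0 n)) q)
      + ∑ j, DD (ex j) (Pgen F U φ (ex j)) q := rfl
  -- Bulk normalization
  have hgradfU : gradfU U φ q = (q.1 / 2) * DD (e0 n) (fun p : Spacetime n => U (p, φ q)) q
      + (1 / 2) * ∑ i, q.2 i * DD (ex i) (fun p : Spacetime n => U (p, φ q)) q := by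
    rw [gradfU]
    have h1 : dt ff q = -q.1 / 2 := DD_ff_e0
    have h2 : ∀ i : Fin n, dx i ff q = q.2 i / 2 := fun i => DD_ff_ex i
    rw [h1, Finset.sum_congr rfl fun i _ => by rw [h2 i]]
    have : ∑ i, q.2 i / 2 * dx i (fun p : Spacetime n => U (p, φ q)) q
        = (1 / 2) * ∑ i, q.2 i * DD (ex i) (fun p : Spacetime n => U (p, φ q)) q := by
      rw [Finset.mul_sum]
      exact Finset.sum_congr rfl fun i _ => by rw [dx_eq]; ring
    rw [this, dt_eq]
    ring
  -- exp relation
  have hE2 : Real.exp (-2 * F (ff q)) = Real.exp (-(F (ff q))) ^ 2 := by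
    rw [sq, ← Real.exp_add]
    congr 1
    ring
  -- normalize the sum with coefficient 2 in the e0 part
  have hSL0 : ∑ i, 2 * DD (ex i) φ q * Hs φ q (e0 n) (ex i)
      = 2 * ∑ i, DD (ex i) φ q * Hs φ q (e0 n) (ex i) := by
    rw [Finset.mul_sum]
    exact Finset.sum_congr rfl fun i _ => by ring
  -- assemble
  rw [hdivP, DD_Pgen_e0 F hF U φ q hffq hφ1 hΦ hU1 (hUder (e0 n)),
    sum_Pgen_ex F hF U φ q hffq hφ1 hΦ hU1 (fun j => hUder (ex j)) hsymm,
    hSL0, hbox, hSst, Bulk, hgradfU,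
    HF_val hF hffq, derivGF hF hffq, GF_val hF hffq, hE2, Sop_eq φ q, ff_eq q]
  ring
end
end

section
/- Let n ≥ 2, let F ∈ C^∞(0,∞) with F'(s) < 0 for all s > 0, and let U ∈ C¹(D × ℝ); write U̇ for the partial derivative of U in its last variable, abbreviate U(φ)(Q) := U(Q, φ(Q)) and U̇(φ)(Q) := U̇(Q, φ(Q)). Let φ ∈ C²(D), set ψ := e^{−F(f)}·φ and L := e^{−F(f)}·( □φ + U̇(φ) ), and let B and the 1-form P be defined by: B := e^{−2F(f)}·( (n−1)/4 − f·F'(f) )·U̇(φ)·φ − e^{−2F(f)}·⟨∇f, (∇_Q U)(·, φ)⟩_g − 2·e^{−2F(f)}·( (n+1)/4 − f·F'(f) )·U(φ), and P_β := e^{−2F(f)}·[ Sφ·∂_βφ − (1/2)·∂_βf·( −(∂_tφ)² + |∇_xφ|² ) ] + e^{−2F(f)}·∂_βf·U(φ) + e^{−2F(f)}·( (n−1)/4 − f·F'(f) )·φ·∂_βφ + e^{−2F(f)}·[ ( f·F'(f) − (n−1)/4 )·F'(f) − (1/2)·G_F(f) ]·∂_βf·φ² for β = 0, …, n. Then the pointwise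 inequality (1/8)·|F'(f)|^{−1}·L² ≥ ( f·|F'(f)|·G_F(f) − H_F(f) )·ψ² − B − div_g P holds everywhere on D. -/
open Real MeasureTheory
open scoped BigOperators

set_option maxHeartbeats 2000000

noncomputable section

/-! ### Auxiliary material for the proof -/

section CarlemanAux

variable {n : ℕ}

theorem CPisOpen_Dom : IsOpen (Dom n) :=
  isOpen_lt (continuous_fst.abs) (continuous_snd.norm)

theorem CPff_eq (p : Spacetime n) : ff p = ((∑ i, p.2 i ^ 2) - p.1 ^ 2) / 4 := by
  have h : ‖p.2‖ ^ 2 = ∑ i, p.2 i ^ 2 := by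
    rw [EuclideanSpace.norm_eq, Real.sq_sqrt (by positivity)]
    simp [sq_abs]
  rw [ff, h]

theorem CPff_pos {q : Spacetime n} (hq : q ∈ Dom n) : 0 < ff q := by
  have h1 : |q.1| < ‖q.2‖ := hq
  have h0 : (0:ℝ) ≤ |q.1| := abs_nonneg _
  have h2 : q.1 ^ 2 < ‖q.2‖ ^ 2 := by
    rw [← sq_abs]; nlinarith
  rw [ff]; linarith

def CPCt (n : ℕ) : Spacetime n →L[ℝ] ℝ := ContinuousLinearMap.fst ℝ ℝ (EuclideanSpace ℝ (Fin n))

def CPCx (i : Fin n) : Spacetime n →L[ℝ] ℝ :=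
  (EuclideanSpace.proj i).comp (ContinuousLinearMap.snd ℝ ℝ (EuclideanSpace ℝ (Fin n)))

@[simp] lemma CPCt_apply (v : Spacetime n) : CPCt n v = v.1 := rfl

@[simp] lemma CPCx_apply (i : Fin n) (v : Spacetime n) : CPCx i v = v.2 i := rfl

def CPLq (q : Spacetime n) : Spacetime n →L[ℝ] ℝ :=
  (2⁻¹ : ℝ) • ((∑ i, q.2 i • CPCx i) - q.1 • CPCt n)

lemma CPsum_mul {m : ℕ} (c : ℝ) (f : Fin m → ℝ) : ∑ i, c * f i = c * ∑ i, f i :=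
  (Finset.mul_sum _ _ _).symm

@[simp] lemma CPLq_apply (q v : Spacetime n) :
    CPLq q v = ((∑ i, q.2 i * v.2 i) - q.1 * v.1) / 2 := by
  simp only [CPLq, ContinuousLinearMap.coe_smul', Pi.smul_apply, ContinuousLinearMap.coe_sub',
    Pi.sub_apply, ContinuousLinearMap.coe_sum', Finset.sum_apply, ContinuousLinearMap.coe_smul,
    CPCx_apply, CPCt_apply, smul_eq_mul]
  ring

lemma CPhasFDerivAt_sq {E : Type*} [NormedAddCommGroup E] [NormedSpace ℝ E] {f : E → ℝ}
    {f' : E →L[ℝ] ℝ} {x : E} (hf : HasFDerivAt f f' x) :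
    HasFDerivAt (fun y => f y ^ 2) ((2 * f x) • f') x := by
  have h := hf.fun_mul hf
  have e : (fun y => f y * f y) = fun y => f y ^ 2 := by funext y; ring
  rw [e] at h
  refine h.congr_fderiv ?_
  rw [two_mul, add_smul]

lemma CPhasFDerivAt_ff (p : Spacetime n) : HasFDerivAt (ff (n := n)) (CPLq p) p := by
  have hb : HasFDerivAt (fun p : Spacetime n => ((∑ i, p.2 i ^ 2) - p.1 ^ 2))
      ((∑ i, (2 * p.2 i) • CPCx i) - (2 * p.1) • CPCt n) p := by
    apply HasFDerivAt.sub
    · exact HasFDerivAt.fun_sum (fun i _ => CPhasFDerivAt_sq (CPCx i).hasFDerivAt)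
    · exact CPhasFDerivAt_sq (CPCt n).hasFDerivAt
  have h := hb.mul_const (4⁻¹ : ℝ)
  have e : (fun p : Spacetime n => ((∑ i, p.2 i ^ 2) - p.1 ^ 2) * 4⁻¹) = ff (n := n) := by
    funext p; rw [CPff_eq]; ring
  rw [e] at h
  refine h.congr_fderiv ?_
  refine ContinuousLinearMap.ext fun v => ?_
  simp only [CPLq_apply, ContinuousLinearMap.smulRight_apply, ContinuousLinearMap.coe_sub',
    Pi.sub_apply, ContinuousLinearMap.coe_sum', Finset.sum_apply, ContinuousLinearMap.coe_smul',
    Pi.smul_apply, CPCx_apply, CPCt_apply, smul_eq_mul]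
  rw [show ∑ i, 2 * p.2 i * v.2 i = 2 * ∑ i, p.2 i * v.2 i by
    rw [Finset.mul_sum]; exact Finset.sum_congr rfl fun i _ => by ring]
  ring

lemma CPdt_ff (p : Spacetime n) : dt ff p = -p.1 / 2 := by
  rw [dt, (CPhasFDerivAt_ff p).fderiv, CPLq_apply]
  simp

lemma CPdx_ff (i : Fin n) (p : Spacetime n) : dx i ff p = p.2 i / 2 := by
  rw [dx, (CPhasFDerivAt_ff p).fderiv, CPLq_apply]
  simp [EuclideanSpace.single_apply]

lemma CPsum_apply {ι : Type*} [DecidableEq ι] (s : Finset ι) (f : ι → EuclideanSpace ℝ (Fin n)) (j : Fin n) :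
    (∑ i ∈ s, f i) j = ∑ i ∈ s, f i j := by
  induction s using Finset.induction with
  | empty => rfl
  | insert _ _ h ih => rw [Finset.sum_insert h, Finset.sum_insert h, ← ih]; rfl

lemma CPsum_single (v : EuclideanSpace ℝ (Fin n)) :
    ∑ i, v i • EuclideanSpace.single i (1:ℝ) = v := by
  ext j
  rw [CPsum_apply]
  simp [EuclideanSpace.single_apply]

lemma CPclm_decomp (L : Spacetime n →L[ℝ] ℝ) (v : Spacetime n) :
    L v = v.1 * L (1, 0) + ∑ i, v.2 i * L (0, EuclideanSpace.single i 1) := by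
  have hv : v = v.1 • ((1:ℝ), (0 : EuclideanSpace ℝ (Fin n))) +
      ∑ i, v.2 i • ((0:ℝ), EuclideanSpace.single i (1:ℝ)) := by
    apply Prod.ext
    · simp [Prod.fst_sum]
    · simp only [Prod.snd_add, Prod.smul_snd, Prod.snd_sum, smul_zero, zero_add]
      exact (CPsum_single v.2).symm
  conv_lhs => rw [hv]
  rw [map_add, _root_.map_smul, map_sum, smul_eq_mul]
  congr 1
  exact Finset.sum_congr rfl fun i _ => by rw [_root_.map_smul, smul_eq_mul]

lemma CPhasFDerivAt_Lq (e : Spacetime n) (q : Spacetime n) :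
    HasFDerivAt (fun p => CPLq p e) (CPLq e) q := by
  have hb : HasFDerivAt (fun p : Spacetime n => ((∑ i, p.2 i * e.2 i) - p.1 * e.1))
      ((∑ i, e.2 i • CPCx i) - e.1 • CPCt n) q := by
    apply HasFDerivAt.sub
    · exact HasFDerivAt.fun_sum (fun i _ => (CPCx i).hasFDerivAt.mul_const (e.2 i))
    · exact (CPCt n).hasFDerivAt.mul_const e.1
  have h := hb.mul_const (2⁻¹ : ℝ)
  have efun : (fun p : Spacetime n => ((∑ i, p.2 i * e.2 i) - p.1 * e.1) * 2⁻¹) =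
      fun p => CPLq p e := by
    funext p; rw [CPLq_apply]; ring
  rw [efun] at h
  exact h

lemma CPSop_eq {q : Spacetime n} (φ : Spacetime n → ℝ) (hq : q ∈ Dom n) :
    Sop φ q = fderiv ℝ φ q ((2⁻¹ : ℝ) • q) := by
  have hn0 : ‖q.2‖ ≠ 0 := (lt_of_le_of_lt (abs_nonneg q.1) hq).ne'
  rw [Sop, dr, mul_div_cancel₀ _ hn0, CPclm_decomp (fderiv ℝ φ q)]
  simp only [dt, dx, Prod.smul_fst, Prod.smul_snd, smul_eq_mul, PiLp.smul_apply]
  rw [show ∑ i, 2⁻¹ * q.2 i * fderiv ℝ φ q (0, EuclideanSpace.single i 1)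
      = 2⁻¹ * ∑ i, q.2 i * fderiv ℝ φ q (0, EuclideanSpace.single i 1) by
    rw [Finset.mul_sum]; exact Finset.sum_congr rfl fun i _ => by ring]
  ring

@[simp] lemma CPLq_e0 (p : Spacetime n) :
    CPLq p ((1:ℝ), (0:EuclideanSpace ℝ (Fin n))) = -(p.1 / 2) := by
  rw [CPLq_apply]; simp; ring

@[simp] lemma CPLq_ex (p : Spacetime n) (j : Fin n) :
    CPLq p ((0:ℝ), EuclideanSpace.single j (1:ℝ)) = p.2 j / 2 := by
  rw [CPLq_apply]; simp [EuclideanSpace.single_apply]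

/-- The generic current component, as a smooth expression, parametrized by direction `e`. -/
def CPPg (F : ℝ → ℝ) (U : Spacetime n × ℝ → ℝ) (φ : Spacetime n → ℝ) (e : Spacetime n)
    (p : Spacetime n) : ℝ :=
  Real.exp (-2 * F (ff p)) *
      (fderiv ℝ φ p ((2⁻¹ : ℝ) • p) * fderiv ℝ φ p e -
        1 / 2 * CPLq p e *
          (-fderiv ℝ φ p (1, 0) ^ 2 + ∑ i, fderiv ℝ φ p (0, EuclideanSpace.single i 1) ^ 2))
    + Real.exp (-2 * F (ff p)) * CPLq p e * U (p, φ p)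
    + Real.exp (-2 * F (ff p)) * (((n : ℝ) - 1) / 4 - ff p * deriv F (ff p)) * φ p *
        fderiv ℝ φ p e
    + Real.exp (-2 * F (ff p)) *
        ((ff p * deriv F (ff p) - ((n : ℝ) - 1) / 4) * deriv F (ff p) - 1 / 2 * GF F (ff p)) *
        CPLq p e * φ p ^ 2

lemma CPPt_eq (F : ℝ → ℝ) (U : Spacetime n × ℝ → ℝ) (φ : Spacetime n → ℝ)
    {p : Spacetime n} (hp : p ∈ Dom n) : Pt F U φ p = CPPg F U φ (1, 0) p := by
  rw [Pt, CPPg, CPSop_eq φ hp]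
  simp only [dt, dx]
  rw [(CPhasFDerivAt_ff p).fderiv]

lemma CPPx_eq (F : ℝ → ℝ) (U : Spacetime n × ℝ → ℝ) (φ : Spacetime n → ℝ) (j : Fin n)
    {p : Spacetime n} (hp : p ∈ Dom n) :
    Px F U φ j p = CPPg F U φ (0, EuclideanSpace.single j 1) p := by
  rw [Px, CPPg, CPSop_eq φ hp]
  simp only [dt, dx]
  rw [(CPhasFDerivAt_ff p).fderiv]

end CarlemanAux

/-- **Lemma 2.10** (the pointwise Carleman inequality): if `F' < 0` on `(0,∞)`, then with
`ψ = e^{−F(f)}φ` and `L = e^{−F(f)}(□φ + U̇(φ))`, everywhere on `D`,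
`(1/8)|F'(f)|⁻¹ L² ≥ (f|F'(f)| G_F(f) − H_F(f)) ψ² − B − div_g P`. -/
theorem carleman_pointwise_inequality (n : ℕ) (hn : 2 ≤ n)
    (F : ℝ → ℝ) (hF : ContDiffOn ℝ (⊤ : ℕ∞) F (Set.Ioi 0))
    (hF' : ∀ s : ℝ, 0 < s → deriv F s < 0)
    (U : Spacetime n × ℝ → ℝ)
    (hU : ContDiffOn ℝ 1 U ((Dom n) ×ˢ (Set.univ : Set ℝ)))
    (φ : Spacetime n → ℝ) (hφ : ContDiffOn ℝ 2 φ (Dom n)) :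
    ∀ q ∈ Dom n,
      (1 / 8) * |deriv F (ff q)|⁻¹ *
          (Real.exp (-(F (ff q))) * (box φ q + Udot U φ q)) ^ 2 ≥
        (ff q * |deriv F (ff q)| * GF F (ff q) - HF F (ff q)) *
            (Real.exp (-(F (ff q))) * φ q) ^ 2 -
          Bulk F U φ q - divP F U φ q := by
  intro q hq
  have hop : IsOpen (Dom n) := CPisOpen_Dom
  have hf0 : 0 < ff q := CPff_pos hq
  have hF1neg : deriv F (ff q) < 0 := hF' _ hf0
  -- F-side differentiability
  have hF1d : HasDerivAt F (deriv F (ff q)) (ff q) :=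
    ((hF.contDiffAt (isOpen_Ioi.mem_nhds hf0)).differentiableAt (by simp)).hasDerivAt
  have hdF : ContDiffOn ℝ (⊤ : ℕ∞) (deriv F) (Set.Ioi 0) := hF.deriv_of_isOpen isOpen_Ioi (by simp)
  have hF2d : HasDerivAt (deriv F) (deriv (deriv F) (ff q)) (ff q) :=
    ((hdF.contDiffAt (isOpen_Ioi.mem_nhds hf0)).differentiableAt (by simp)).hasDerivAt
  have hgd : HasDerivAt (fun s : ℝ => s * deriv F s)
      (1 * deriv F (ff q) + ff q * deriv (deriv F) (ff q)) (ff q) :=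
    (hasDerivAt_id (ff q)).mul hF2d
  have hgc : ContDiffOn ℝ (⊤ : ℕ∞) (fun s : ℝ => s * deriv F s) (Set.Ioi 0) := contDiffOn_id.mul hdF
  have hGFc : ContDiffOn ℝ (⊤ : ℕ∞) (GF F) (Set.Ioi 0) := (hgc.deriv_of_isOpen isOpen_Ioi (by simp)).neg
  have hGFd : HasDerivAt (GF F) (deriv (GF F) (ff q)) (ff q) :=
    ((hGFc.contDiffAt (isOpen_Ioi.mem_nhds hf0)).differentiableAt (by simp)).hasDerivAt
  have hG0 : GF F (ff q) = -(1 * deriv F (ff q) + ff q * deriv (deriv F) (ff q)) := by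
    unfold GF; rw [hgd.deriv]
  have hGg : HasDerivAt (fun t : ℝ => t * GF F t)
      (1 * GF F (ff q) + ff q * deriv (GF F) (ff q)) (ff q) :=
    (hasDerivAt_id (ff q)).mul hGFd
  have hHFe : HF F (ff q) = 1 / 2 * (1 * GF F (ff q) + ff q * deriv (GF F) (ff q)) := by
    unfold HF; rw [hGg.deriv]
  -- φ-side differentiability
  have hφat : ContDiffAt ℝ 2 φ q := hφ.contDiffAt (hop.mem_nhds hq)
  have hφd : HasFDerivAt φ (fderiv ℝ φ q) q :=
    (hφat.differentiableAt (by norm_num)).hasFDerivAt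
  have hHd : HasFDerivAt (fderiv ℝ φ) (fderiv ℝ (fderiv ℝ φ) q) q :=
    ((hφat.fderiv_right (by norm_num)).differentiableAt one_ne_zero).hasFDerivAt
  have hsym : ∀ v w : Spacetime n,
      fderiv ℝ (fderiv ℝ φ) q v w = fderiv ℝ (fderiv ℝ φ) q w v :=
    fun v w => hφat.isSymmSndFDerivAt (by norm_num) v w
  -- U-side differentiability
  have hUat : HasFDerivAt U (fderiv ℝ U (q, φ q)) (q, φ q) :=
    (((hU.contDiffAt (((hop.prod isOpen_univ)).mem_nhds ⟨hq, trivial⟩)).differentiableAt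
      one_ne_zero).hasFDerivAt)
  have hUc : HasFDerivAt (fun p : Spacetime n => U (p, φ p))
      ((fderiv ℝ U (q, φ q)).comp
        ((ContinuousLinearMap.id ℝ (Spacetime n)).prod (fderiv ℝ φ q))) q :=
    hUat.comp q ((hasFDerivAt_id q).prodMk hφd)
  have hUfr : HasFDerivAt (fun p : Spacetime n => U (p, φ q))
      ((fderiv ℝ U (q, φ q)).comp
        ((ContinuousLinearMap.id ℝ (Spacetime n)).prod (0 : Spacetime n →L[ℝ] ℝ))) q :=
    hUat.comp q ((hasFDerivAt_id q).prodMk (hasFDerivAt_const (φ q) q))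
  have hUdot : Udot U φ q = fderiv ℝ U (q, φ q) ((0:Spacetime n), (1:ℝ)) := by
    rw [Udot]
    have h2 : HasDerivAt (fun y : ℝ => ((q, y) : Spacetime n × ℝ))
        ((0:Spacetime n), (1:ℝ)) (φ q) :=
      (hasDerivAt_const (φ q) q).prodMk (hasDerivAt_id (φ q))
    have h1 : HasDerivAt (fun y : ℝ => U (q, y)) (fderiv ℝ U (q, φ q) ((0:Spacetime n), (1:ℝ))) (φ q) :=
      HasFDerivAt.comp_hasDerivAt (hl := hUat) (hf := h2)
    exact h1.deriv
  have hDUsplit : ∀ (v : Spacetime n) (s : ℝ), fderiv ℝ U (q, φ q) (v, s) =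
      fderiv ℝ U (q, φ q) (v, (0:ℝ)) + s * fderiv ℝ U (q, φ q) ((0:Spacetime n), (1:ℝ)) := by
    intro v s
    have hvs : ((v, s) : Spacetime n × ℝ) = (v, (0:ℝ)) + s • ((0:Spacetime n), (1:ℝ)) := by
      simp
    rw [hvs, map_add, _root_.map_smul, smul_eq_mul]
  -- derivative building blocks
  have hDe : ∀ e : Spacetime n, HasFDerivAt (fun p => fderiv ℝ φ p e)
      ((fderiv ℝ φ q).comp (0 : Spacetime n →L[ℝ] Spacetime n)
        + (fderiv ℝ (fderiv ℝ φ) q).flip e) q :=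
    fun e => hHd.clm_apply (hasFDerivAt_const e q)
  have hSd : HasFDerivAt (fun p : Spacetime n => fderiv ℝ φ p ((2⁻¹ : ℝ) • p))
      ((fderiv ℝ φ q).comp ((2⁻¹ : ℝ) • ContinuousLinearMap.id ℝ (Spacetime n))
        + (fderiv ℝ (fderiv ℝ φ) q).flip ((2⁻¹ : ℝ) • q)) q :=
    hHd.clm_apply ((hasFDerivAt_id q).const_smul (2⁻¹ : ℝ))
  have hQd : HasFDerivAt (fun p : Spacetime n => -fderiv ℝ φ p ((1:ℝ), (0:EuclideanSpace ℝ (Fin n))) ^ 2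
      + ∑ i, fderiv ℝ φ p (((0:ℝ), EuclideanSpace.single i (1:ℝ))) ^ 2)
      ((-((2 * fderiv ℝ φ q ((1:ℝ), (0:EuclideanSpace ℝ (Fin n)))) •
          ((fderiv ℝ φ q).comp (0 : Spacetime n →L[ℝ] Spacetime n)
            + (fderiv ℝ (fderiv ℝ φ) q).flip ((1:ℝ), (0:EuclideanSpace ℝ (Fin n))))))
        + ∑ i, (2 * fderiv ℝ φ q (((0:ℝ), EuclideanSpace.single i (1:ℝ)))) •
          ((fderiv ℝ φ q).comp (0 : Spacetime n →L[ℝ] Spacetime n)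
            + (fderiv ℝ (fderiv ℝ φ) q).flip (((0:ℝ), EuclideanSpace.single i (1:ℝ))))) q :=
    (CPhasFDerivAt_sq (hDe _)).neg.add
      (HasFDerivAt.fun_sum (fun i _ => CPhasFDerivAt_sq (hDe _)))
  have hFf : HasFDerivAt (fun p : Spacetime n => F (ff p)) (deriv F (ff q) • CPLq q) q :=
    hF1d.comp_hasFDerivAt q (CPhasFDerivAt_ff q)
  have hwd : HasFDerivAt (fun p : Spacetime n => Real.exp (-2 * F (ff p)))
      (Real.exp (-2 * F (ff q)) • ((-2 : ℝ) • (deriv F (ff q) • CPLq q))) q :=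
    (hFf.const_mul (-2 : ℝ)).exp
  have hgFf : HasFDerivAt (fun p : Spacetime n => ff p * deriv F (ff p))
      ((1 * deriv F (ff q) + ff q * deriv (deriv F) (ff q)) • CPLq q) q :=
    hgd.comp_hasFDerivAt q (CPhasFDerivAt_ff q)
  have hAd : HasFDerivAt (fun p : Spacetime n => ((n : ℝ) - 1) / 4 - ff p * deriv F (ff p))
      ((0 : Spacetime n →L[ℝ] ℝ)
        - (1 * deriv F (ff q) + ff q * deriv (deriv F) (ff q)) • CPLq q) q :=
    (hasFDerivAt_const (((n : ℝ) - 1) / 4) q).sub hgFf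
  have hdFf : HasFDerivAt (fun p : Spacetime n => deriv F (ff p))
      (deriv (deriv F) (ff q) • CPLq q) q :=
    hF2d.comp_hasFDerivAt q (CPhasFDerivAt_ff q)
  have hGFf : HasFDerivAt (fun p : Spacetime n => GF F (ff p))
      (deriv (GF F) (ff q) • CPLq q) q :=
    hGFd.comp_hasFDerivAt q (CPhasFDerivAt_ff q)
  have hCd : HasFDerivAt (fun p : Spacetime n =>
      (ff p * deriv F (ff p) - ((n : ℝ) - 1) / 4) * deriv F (ff p) - 1 / 2 * GF F (ff p))
      (((ff q * deriv F (ff q) - ((n : ℝ) - 1) / 4) • (deriv (deriv F) (ff q) • CPLq q)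
        + deriv F (ff q) •
          ((1 * deriv F (ff q) + ff q * deriv (deriv F) (ff q)) • CPLq q - 0))
        - (1 / 2 : ℝ) • (deriv (GF F) (ff q) • CPLq q)) q :=
    ((hgFf.sub (hasFDerivAt_const (((n : ℝ) - 1) / 4) q)).mul hdFf).sub
      (hGFf.const_mul (1 / 2 : ℝ))
  -- the key evaluation of the derivative of the generic current
  have hkey : ∀ e v : Spacetime n, fderiv ℝ (CPPg F U φ e) q v = Real.exp (-2 * F (ff q)) * (-2 * deriv F (ff q) * CPLq q v) * (2⁻¹ * fderiv ℝ φ q q * fderiv ℝ φ q e - 1 / 2 * CPLq q e * (-fderiv ℝ φ q ((1:ℝ), (0:EuclideanSpace ℝ (Fin n))) ^ 2 + (∑ i, fderiv ℝ φ q (((0:ℝ), EuclideanSpace.single i (1:ℝ))) ^ 2))) + Real.exp (-2 * F (ff q)) * ((2⁻¹ * fderiv ℝ (fderiv ℝ φ) q v q + 2⁻¹ * fderiv ℝ φ q v) * fderiv ℝ φ q e + 2⁻¹ * fderiv ℝ φ q q * fderiv ℝ (fderiv ℝ φ) q v e - 1 / 2 * (CPLq e v * (-fderiv ℝ φ q ((1:ℝ),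 (0:EuclideanSpace ℝ (Fin n))) ^ 2 + (∑ i, fderiv ℝ φ q (((0:ℝ), EuclideanSpace.single i (1:ℝ))) ^ 2)) + CPLq q e * (-(2 * fderiv ℝ φ q ((1:ℝ), (0:EuclideanSpace ℝ (Fin n))) * fderiv ℝ (fderiv ℝ φ) q v ((1:ℝ), (0:EuclideanSpace ℝ (Fin n)))) + ∑ i, 2 * fderiv ℝ φ q (((0:ℝ), EuclideanSpace.single i (1:ℝ))) * (fderiv ℝ (fderiv ℝ φ) q v (((0:ℝ), EuclideanSpace.single i (1:ℝ))))))) + Real.exp (-2 * F (ff q)) * (-2 * deriv F (ff q) * CPLq q v) * CPLq q e * U (q, φ q) + Real.exp (-2 * F (ff q)) * CPLq e v * U (q, φ q) + Real.exp (-2 * F (ff q)) * CPLq q e * fderiv ℝ U (q, φ q) (v, fderiv ℝ φ q v) + Real.exp (-2 * F (ff q)) * (-2 * deriv F (ff q) * CPLq q v) * (((n : ℝ) - 1) / 4 - ff q * deriv F (ff q)) * φ q * fderiv ℝ φ q e + Real.exp (-2 * F (ff q)) * (-((1 * deriv F (ff q) + ff q * deriv (deriv F) (ff q)) * CPLq q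 v)) * φ q * fderiv ℝ φ q e + Real.exp (-2 * F (ff q)) * (((n : ℝ) - 1) / 4 - ff q * deriv F (ff q)) * fderiv ℝ φ q v * fderiv ℝ φ q e + Real.exp (-2 * F (ff q)) * (((n : ℝ) - 1) / 4 - ff q * deriv F (ff q)) * φ q * fderiv ℝ (fderiv ℝ φ) q v e + Real.exp (-2 * F (ff q)) * (-2 * deriv F (ff q) * CPLq q v) * ((ff q * deriv F (ff q) - ((n : ℝ) - 1) / 4) * deriv F (ff q) - 1 / 2 * GF F (ff q)) * CPLq q e * φ q ^ 2 + Real.exp (-2 * F (ff q)) * (((1 * deriv F (ff q) + ff q * deriv (deriv F) (ff q)) * deriv F (ff q) + (ff q * deriv F (ff q) - ((n : ℝ) - 1) / 4) * deriv (deriv F) (ff q) - 1 / 2 * deriv (GF F) (ff q)) * CPLq q v) * CPLq q e * φ q ^ 2 + Real.exp (-2 * F (ff q)) * ((ff q * deriv F (ff q) - ((n : ℝ) - 1) / 4) * deriv F (ff q) - 1 / 2 * GF F (ff q)) * CPLq e v * φ q ^ 2 + Real.exp (-2 * F (ff q)) * ((ff q * deriv F (ff q) - ((n : ℝ) - 1)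 / 4) * deriv F (ff q) - 1 / 2 * GF F (ff q)) * CPLq q e * (2 * φ q * fderiv ℝ φ q v) := by
    intro e v
    have hL := (((hwd.fun_mul ((hSd.fun_mul (hDe e)).sub
        ((((CPhasFDerivAt_Lq e q).const_mul (1 / 2 : ℝ))).fun_mul hQd))).add
        ((hwd.fun_mul (CPhasFDerivAt_Lq e q)).fun_mul hUc)).add
        (((hwd.fun_mul hAd).fun_mul hφd).fun_mul (hDe e))).add
        (((hwd.fun_mul hCd).fun_mul (CPhasFDerivAt_Lq e q)).fun_mul (CPhasFDerivAt_sq hφd))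
    have h2 : HasFDerivAt (CPPg F U φ e) _ q := hL
    rw [h2.fderiv]
    simp only [ContinuousLinearMap.add_apply, ContinuousLinearMap.coe_comp',
      Function.comp_apply, ContinuousLinearMap.coe_smul', Pi.smul_apply,
      ContinuousLinearMap.flip_apply, ContinuousLinearMap.smulRight_apply,
      ContinuousLinearMap.coe_sub', Pi.sub_apply, ContinuousLinearMap.zero_apply,
      ContinuousLinearMap.prod_apply, ContinuousLinearMap.id_apply,
      ContinuousLinearMap.coe_sum', Finset.sum_apply, ContinuousLinearMap.neg_apply,
      ContinuousLinearMap.coe_neg', Pi.neg_apply, map_zero, zero_add, add_zero,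
      smul_eq_mul, _root_.map_smul, CPLq_apply]
    ring
    -- values of the two current components' derivatives in the diagonal directions
  have hdtPt : dt (Pt F U φ) q = Real.exp (-2 * F (ff q)) * (-2 * deriv F (ff q) * (-(q.1 / 2))) * ((2⁻¹ * (q.1 * fderiv ℝ φ q ((1:ℝ), (0:EuclideanSpace ℝ (Fin n))) + (∑ i, q.2 i * fderiv ℝ φ q (((0:ℝ), EuclideanSpace.single i (1:ℝ)))))) * fderiv ℝ φ q ((1:ℝ), (0:EuclideanSpace ℝ (Fin n))) - 1 / 2 * (-(q.1 / 2)) * (-fderiv ℝ φ q ((1:ℝ), (0:EuclideanSpace ℝ (Fin n))) ^ 2 + (∑ i, fderiv ℝ φ q (((0:ℝ), EuclideanSpace.single i (1:ℝ))) ^ 2))) + Real.exp (-2 * F (ff q)) * ((2⁻¹ * (q.1 * fderiv ℝ (fderiv ℝ φ) q ((1:ℝ), (0:EuclideanSpace ℝ (Fin n))) ((1:ℝ), (0:EuclideanSpace ℝ (Fin n))) + (∑ i, q.2 i * fderiv ℝ (fderiv ℝ φ) q ((1:ℝ), (0:EuclideanSpace ℝ (Fin n))) (((0:ℝ), EuclideanSpace.single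 i (1:ℝ))))) + 2⁻¹ * fderiv ℝ φ q ((1:ℝ), (0:EuclideanSpace ℝ (Fin n)))) * fderiv ℝ φ q ((1:ℝ), (0:EuclideanSpace ℝ (Fin n))) + (2⁻¹ * (q.1 * fderiv ℝ φ q ((1:ℝ), (0:EuclideanSpace ℝ (Fin n))) + (∑ i, q.2 i * fderiv ℝ φ q (((0:ℝ), EuclideanSpace.single i (1:ℝ)))))) * fderiv ℝ (fderiv ℝ φ) q ((1:ℝ), (0:EuclideanSpace ℝ (Fin n))) ((1:ℝ), (0:EuclideanSpace ℝ (Fin n))) - 1 / 2 * ((-(1 / 2 : ℝ)) * (-fderiv ℝ φ q ((1:ℝ), (0:EuclideanSpace ℝ (Fin n))) ^ 2 + (∑ i, fderiv ℝ φ q (((0:ℝ), EuclideanSpace.single i (1:ℝ))) ^ 2)) + (-(q.1 / 2)) * (-(2 * fderiv ℝ φ q ((1:ℝ), (0:EuclideanSpace ℝ (Fin n))) * fderiv ℝ (fderiv ℝ φ) q ((1:ℝ), (0:EuclideanSpace ℝ (Fin n))) ((1:ℝ), (0:EuclideanSpace ℝ (Fin n)))) + ∑ i, 2 * fderiv ℝ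 φ q (((0:ℝ), EuclideanSpace.single i (1:ℝ))) * fderiv ℝ (fderiv ℝ φ) q ((1:ℝ), (0:EuclideanSpace ℝ (Fin n))) (((0:ℝ), EuclideanSpace.single i (1:ℝ)))))) + Real.exp (-2 * F (ff q)) * (-2 * deriv F (ff q) * (-(q.1 / 2))) * (-(q.1 / 2)) * U (q, φ q) + Real.exp (-2 * F (ff q)) * (-(1 / 2 : ℝ)) * U (q, φ q) + Real.exp (-2 * F (ff q)) * (-(q.1 / 2)) * (fderiv ℝ U (q, φ q) (((1:ℝ), (0:EuclideanSpace ℝ (Fin n))), (0:ℝ)) + (fderiv ℝ φ q ((1:ℝ), (0:EuclideanSpace ℝ (Fin n)))) * (fderiv ℝ U (q, φ q) ((0:Spacetime n), (1:ℝ)))) + Real.exp (-2 * F (ff q)) * (-2 * deriv F (ff q) * (-(q.1 / 2))) * (((n : ℝ) - 1) / 4 - ff q * deriv F (ff q)) * φ q * fderiv ℝ φ q ((1:ℝ), (0:EuclideanSpace ℝ (Fin n))) + Real.exp (-2 * F (ff q)) * (-((1 * deriv F (ff q) + ff q * deriv (deriv F) (ff q)) * (-(q.1 / 2)))) * φ q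 * fderiv ℝ φ q ((1:ℝ), (0:EuclideanSpace ℝ (Fin n))) + Real.exp (-2 * F (ff q)) * (((n : ℝ) - 1) / 4 - ff q * deriv F (ff q)) * fderiv ℝ φ q ((1:ℝ), (0:EuclideanSpace ℝ (Fin n))) * fderiv ℝ φ q ((1:ℝ), (0:EuclideanSpace ℝ (Fin n))) + Real.exp (-2 * F (ff q)) * (((n : ℝ) - 1) / 4 - ff q * deriv F (ff q)) * φ q * fderiv ℝ (fderiv ℝ φ) q ((1:ℝ), (0:EuclideanSpace ℝ (Fin n))) ((1:ℝ), (0:EuclideanSpace ℝ (Fin n))) + Real.exp (-2 * F (ff q)) * (-2 * deriv F (ff q) * (-(q.1 / 2))) * ((ff q * deriv F (ff q) - ((n : ℝ) - 1) / 4) * deriv F (ff q) - 1 / 2 * GF F (ff q)) * (-(q.1 / 2)) * φ q ^ 2 + Real.exp (-2 * F (ff q)) * (((1 * deriv F (ff q) + ff q * deriv (deriv F) (ff q)) * deriv F (ff q) + (ff q * deriv F (ff q) - ((n : ℝ) - 1) / 4) * deriv (deriv F) (ff q) - 1 / 2 * deriv (GF F) (ff q)) * (-(q.1 / 2))) * (-(q.1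 / 2)) * φ q ^ 2 + Real.exp (-2 * F (ff q)) * ((ff q * deriv F (ff q) - ((n : ℝ) - 1) / 4) * deriv F (ff q) - 1 / 2 * GF F (ff q)) * (-(1 / 2 : ℝ)) * φ q ^ 2 + Real.exp (-2 * F (ff q)) * ((ff q * deriv F (ff q) - ((n : ℝ) - 1) / 4) * deriv F (ff q) - 1 / 2 * GF F (ff q)) * (-(q.1 / 2)) * (2 * φ q * fderiv ℝ φ q ((1:ℝ), (0:EuclideanSpace ℝ (Fin n)))) := by
    have heq : fderiv ℝ (Pt F U φ) q = fderiv ℝ (CPPg F U φ ((1:ℝ), (0:EuclideanSpace ℝ (Fin n)))) q := by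
      apply Filter.EventuallyEq.fderiv_eq
      filter_upwards [hop.mem_nhds hq] with p hp
      exact CPPt_eq F U φ hp
    rw [dt, heq, hkey]
    rw [CPclm_decomp (fderiv ℝ φ q) q,
        CPclm_decomp (fderiv ℝ (fderiv ℝ φ) q ((1:ℝ), (0:EuclideanSpace ℝ (Fin n)))) q, hDUsplit]
    simp only [CPLq_e0, CPLq_ex]
  have hdxPx : ∀ j : Fin n, dx j (Px F U φ j) q = (-deriv F (ff q) * Real.exp (-2 * F (ff q)) * (2⁻¹ * (q.1 * fderiv ℝ φ q ((1:ℝ), (0:EuclideanSpace ℝ (Fin n))) + (∑ i, q.2 i * fderiv ℝ φ q (((0:ℝ), EuclideanSpace.single i (1:ℝ)))))) + Real.exp (-2 * F (ff q)) * (fderiv ℝ U (q, φ q) ((0:Spacetime n), (1:ℝ))) / 2 - deriv F (ff q) * Real.exp (-2 * F (ff q)) * (((n : ℝ) - 1) / 4 - ff q * deriv F (ff q)) * φ q - (deriv F (ff q) + ff q * deriv (deriv F) (ff q)) * Real.exp (-2 * F (ff q)) * φ q / 2 + Real.exp (-2 * F (ff q)) * ((ff q * deriv F (ff q) - ((n :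 ℝ) - 1) / 4) * deriv F (ff q) - 1 / 2 * GF F (ff q)) * φ q) * (q.2 j * fderiv ℝ φ q (((0:ℝ), EuclideanSpace.single j (1:ℝ)))) + (Real.exp (-2 * F (ff q)) / 2 + Real.exp (-2 * F (ff q)) * (((n : ℝ) - 1) / 4 - ff q * deriv F (ff q))) * fderiv ℝ φ q (((0:ℝ), EuclideanSpace.single j (1:ℝ))) ^ 2 + (deriv F (ff q) * Real.exp (-2 * F (ff q)) * (-fderiv ℝ φ q ((1:ℝ), (0:EuclideanSpace ℝ (Fin n))) ^ 2 + (∑ i, fderiv ℝ φ q (((0:ℝ), EuclideanSpace.single i (1:ℝ))) ^ 2)) / 4 - deriv F (ff q) * Real.exp (-2 * F (ff q)) * U (q, φ q) / 2 - deriv F (ff q) * Real.exp (-2 * F (ff q)) * ((ff q * deriv F (ff q) - ((n : ℝ) - 1) / 4) * deriv F (ff q) - 1 / 2 * GF F (ff q)) * φ q ^ 2 / 2 + Real.exp (-2 * F (ff q)) * ((1 * deriv F (ff q) + ff q * deriv (deriv F) (ff q)) * deriv F (ff q) + (ff q * deriv F (ff q) - ((n : ℝ) - 1) / 4) * deriv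 (deriv F) (ff q) - 1 / 2 * deriv (GF F) (ff q)) * φ q ^ 2 / 4) * q.2 j ^ 2 + (Real.exp (-2 * F (ff q)) * (2⁻¹ * (q.1 * fderiv ℝ φ q ((1:ℝ), (0:EuclideanSpace ℝ (Fin n))) + (∑ i, q.2 i * fderiv ℝ φ q (((0:ℝ), EuclideanSpace.single i (1:ℝ)))))) + Real.exp (-2 * F (ff q)) * (((n : ℝ) - 1) / 4 - ff q * deriv F (ff q)) * φ q) * fderiv ℝ (fderiv ℝ φ) q (((0:ℝ), EuclideanSpace.single j (1:ℝ))) (((0:ℝ), EuclideanSpace.single j (1:ℝ))) + (Real.exp (-2 * F (ff q)) * (fderiv ℝ φ q ((1:ℝ), (0:EuclideanSpace ℝ (Fin n)))) / 2) * (q.2 j * fderiv ℝ (fderiv ℝ φ) q ((1:ℝ), (0:EuclideanSpace ℝ (Fin n))) (((0:ℝ), EuclideanSpace.single j (1:ℝ)))) + (Real.exp (-2 * F (ff q)) * q.1 / 2) * (fderiv ℝ φ q (((0:ℝ), EuclideanSpace.single j (1:ℝ))) * fderiv ℝ (fderiv ℝ φ) q ((1:ℝ), (0:EuclideanSpace ℝ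 (Fin n))) (((0:ℝ), EuclideanSpace.single j (1:ℝ)))) + (Real.exp (-2 * F (ff q)) / 2) * (fderiv ℝ φ q (((0:ℝ), EuclideanSpace.single j (1:ℝ))) * (∑ i, q.2 i * fderiv ℝ (fderiv ℝ φ) q (((0:ℝ), EuclideanSpace.single j (1:ℝ))) (((0:ℝ), EuclideanSpace.single i (1:ℝ))))) + (-(Real.exp (-2 * F (ff q)) / 4)) * (q.2 j * (∑ i, 2 * fderiv ℝ φ q (((0:ℝ), EuclideanSpace.single i (1:ℝ))) * fderiv ℝ (fderiv ℝ φ) q (((0:ℝ), EuclideanSpace.single j (1:ℝ))) (((0:ℝ), EuclideanSpace.single i (1:ℝ))))) + (Real.exp (-2 * F (ff q)) / 2) * (q.2 j * (fderiv ℝ U (q, φ q) ((((0:ℝ), EuclideanSpace.single j (1:ℝ))), (0:ℝ)))) + (-(Real.exp (-2 * F (ff q)) * (-fderiv ℝ φ q ((1:ℝ), (0:EuclideanSpace ℝ (Fin n))) ^ 2 + (∑ i, fderiv ℝ φ q (((0:ℝ), EuclideanSpace.single i (1:ℝ))) ^ 2)) / 4) + Real.exp (-2 * F (ff q)) * U (q,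 φ q) / 2 + Real.exp (-2 * F (ff q)) * ((ff q * deriv F (ff q) - ((n : ℝ) - 1) / 4) * deriv F (ff q) - 1 / 2 * GF F (ff q)) * φ q ^ 2 / 2) := by
    intro j
    have heq : fderiv ℝ (Px F U φ j) q = fderiv ℝ (CPPg F U φ (((0:ℝ), EuclideanSpace.single j (1:ℝ)))) q := by
      apply Filter.EventuallyEq.fderiv_eq
      filter_upwards [hop.mem_nhds hq] with p hp
      exact CPPx_eq F U φ j hp
    rw [dx, heq, hkey]
    rw [CPclm_decomp (fderiv ℝ φ q) q,
        CPclm_decomp (fderiv ℝ (fderiv ℝ φ) q (((0:ℝ), EuclideanSpace.single j (1:ℝ)))) q,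
        hsym (((0:ℝ), EuclideanSpace.single j (1:ℝ))) ((1:ℝ), (0:EuclideanSpace ℝ (Fin n))), hDUsplit]
    simp only [CPLq_e0, CPLq_ex]
    norm_num
    ring
  have hdivP : divP F U φ q = -(Real.exp (-2 * F (ff q)) * (-2 * deriv F (ff q) * (-(q.1 / 2))) * ((2⁻¹ * (q.1 * fderiv ℝ φ q ((1:ℝ), (0:EuclideanSpace ℝ (Fin n))) + (∑ i, q.2 i * fderiv ℝ φ q (((0:ℝ), EuclideanSpace.single i (1:ℝ)))))) * fderiv ℝ φ q ((1:ℝ), (0:EuclideanSpace ℝ (Fin n))) - 1 / 2 * (-(q.1 / 2)) * (-fderiv ℝ φ q ((1:ℝ), (0:EuclideanSpace ℝ (Fin n))) ^ 2 + (∑ i, fderiv ℝ φ q (((0:ℝ), EuclideanSpace.single i (1:ℝ))) ^ 2))) + Real.exp (-2 * F (ff q)) * ((2⁻¹ * (q.1 * fderiv ℝ (fderiv ℝ φ) q ((1:ℝ), (0:EuclideanSpace ℝ (Fin n))) ((1:ℝ), (0:EuclideanSpace ℝ (Fin n))) + (∑ i, q.2 i * fderiv ℝ (fderiv ℝ φ)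 q ((1:ℝ), (0:EuclideanSpace ℝ (Fin n))) (((0:ℝ), EuclideanSpace.single i (1:ℝ))))) + 2⁻¹ * fderiv ℝ φ q ((1:ℝ), (0:EuclideanSpace ℝ (Fin n)))) * fderiv ℝ φ q ((1:ℝ), (0:EuclideanSpace ℝ (Fin n))) + (2⁻¹ * (q.1 * fderiv ℝ φ q ((1:ℝ), (0:EuclideanSpace ℝ (Fin n))) + (∑ i, q.2 i * fderiv ℝ φ q (((0:ℝ), EuclideanSpace.single i (1:ℝ)))))) * fderiv ℝ (fderiv ℝ φ) q ((1:ℝ), (0:EuclideanSpace ℝ (Fin n))) ((1:ℝ), (0:EuclideanSpace ℝ (Fin n))) - 1 / 2 * ((-(1 / 2 : ℝ)) * (-fderiv ℝ φ q ((1:ℝ), (0:EuclideanSpace ℝ (Fin n))) ^ 2 + (∑ i, fderiv ℝ φ q (((0:ℝ), EuclideanSpace.single i (1:ℝ))) ^ 2)) + (-(q.1 / 2)) * (-(2 * fderiv ℝ φ q ((1:ℝ), (0:EuclideanSpace ℝ (Fin n))) * fderiv ℝ (fderiv ℝ φ) q ((1:ℝ), (0:EuclideanSpace ℝ (Fin n)))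 ((1:ℝ), (0:EuclideanSpace ℝ (Fin n)))) + ∑ i, 2 * fderiv ℝ φ q (((0:ℝ), EuclideanSpace.single i (1:ℝ))) * fderiv ℝ (fderiv ℝ φ) q ((1:ℝ), (0:EuclideanSpace ℝ (Fin n))) (((0:ℝ), EuclideanSpace.single i (1:ℝ)))))) + Real.exp (-2 * F (ff q)) * (-2 * deriv F (ff q) * (-(q.1 / 2))) * (-(q.1 / 2)) * U (q, φ q) + Real.exp (-2 * F (ff q)) * (-(1 / 2 : ℝ)) * U (q, φ q) + Real.exp (-2 * F (ff q)) * (-(q.1 / 2)) * (fderiv ℝ U (q, φ q) (((1:ℝ), (0:EuclideanSpace ℝ (Fin n))), (0:ℝ)) + (fderiv ℝ φ q ((1:ℝ), (0:EuclideanSpace ℝ (Fin n)))) * (fderiv ℝ U (q, φ q) ((0:Spacetime n), (1:ℝ)))) + Real.exp (-2 * F (ff q)) * (-2 * deriv F (ff q) * (-(q.1 / 2))) * (((n : ℝ) - 1) / 4 - ff q * deriv F (ff q)) * φ q * fderiv ℝ φ q ((1:ℝ), (0:EuclideanSpace ℝ (Fin n))) + Real.exp (-2 * F (ff q)) * (-((1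 * deriv F (ff q) + ff q * deriv (deriv F) (ff q)) * (-(q.1 / 2)))) * φ q * fderiv ℝ φ q ((1:ℝ), (0:EuclideanSpace ℝ (Fin n))) + Real.exp (-2 * F (ff q)) * (((n : ℝ) - 1) / 4 - ff q * deriv F (ff q)) * fderiv ℝ φ q ((1:ℝ), (0:EuclideanSpace ℝ (Fin n))) * fderiv ℝ φ q ((1:ℝ), (0:EuclideanSpace ℝ (Fin n))) + Real.exp (-2 * F (ff q)) * (((n : ℝ) - 1) / 4 - ff q * deriv F (ff q)) * φ q * fderiv ℝ (fderiv ℝ φ) q ((1:ℝ), (0:EuclideanSpace ℝ (Fin n))) ((1:ℝ), (0:EuclideanSpace ℝ (Fin n))) + Real.exp (-2 * F (ff q)) * (-2 * deriv F (ff q) * (-(q.1 / 2))) * ((ff q * deriv F (ff q) - ((n : ℝ) - 1) / 4) * deriv F (ff q) - 1 / 2 * GF F (ff q)) * (-(q.1 / 2)) * φ q ^ 2 + Real.exp (-2 * F (ff q)) * (((1 * deriv F (ff q) + ff q * deriv (deriv F) (ff q)) * deriv F (ff q) + (ff q * deriv F (ff q) - ((n : ℝ) - 1) / 4) * deriv (deriv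 F) (ff q) - 1 / 2 * deriv (GF F) (ff q)) * (-(q.1 / 2))) * (-(q.1 / 2)) * φ q ^ 2 + Real.exp (-2 * F (ff q)) * ((ff q * deriv F (ff q) - ((n : ℝ) - 1) / 4) * deriv F (ff q) - 1 / 2 * GF F (ff q)) * (-(1 / 2 : ℝ)) * φ q ^ 2 + Real.exp (-2 * F (ff q)) * ((ff q * deriv F (ff q) - ((n : ℝ) - 1) / 4) * deriv F (ff q) - 1 / 2 * GF F (ff q)) * (-(q.1 / 2)) * (2 * φ q * fderiv ℝ φ q ((1:ℝ), (0:EuclideanSpace ℝ (Fin n))))) + ∑ j, ((-deriv F (ff q) * Real.exp (-2 * F (ff q)) * (2⁻¹ * (q.1 * fderiv ℝ φ q ((1:ℝ), (0:EuclideanSpace ℝ (Fin n))) + (∑ i, q.2 i * fderiv ℝ φ q (((0:ℝ), EuclideanSpace.single i (1:ℝ)))))) + Real.exp (-2 * F (ff q)) * (fderiv ℝ U (q, φ q) ((0:Spacetime n), (1:ℝ))) / 2 - deriv F (ff q) * Real.exp (-2 * F (ff q)) * (((n : ℝ) - 1) / 4 - ff q * deriv F (ff q)) * φ q - (deriv F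 (ff q) + ff q * deriv (deriv F) (ff q)) * Real.exp (-2 * F (ff q)) * φ q / 2 + Real.exp (-2 * F (ff q)) * ((ff q * deriv F (ff q) - ((n : ℝ) - 1) / 4) * deriv F (ff q) - 1 / 2 * GF F (ff q)) * φ q) * (q.2 j * fderiv ℝ φ q (((0:ℝ), EuclideanSpace.single j (1:ℝ)))) + (Real.exp (-2 * F (ff q)) / 2 + Real.exp (-2 * F (ff q)) * (((n : ℝ) - 1) / 4 - ff q * deriv F (ff q))) * fderiv ℝ φ q (((0:ℝ), EuclideanSpace.single j (1:ℝ))) ^ 2 + (deriv F (ff q) * Real.exp (-2 * F (ff q)) * (-fderiv ℝ φ q ((1:ℝ), (0:EuclideanSpace ℝ (Fin n))) ^ 2 + (∑ i, fderiv ℝ φ q (((0:ℝ), EuclideanSpace.single i (1:ℝ))) ^ 2)) / 4 - deriv F (ff q) * Real.exp (-2 * F (ff q)) * U (q, φ q) / 2 - deriv F (ff q) * Real.exp (-2 * F (ff q)) * ((ff q * deriv F (ff q) - ((n : ℝ) - 1) / 4) * deriv F (ff q) - 1 / 2 * GF F (ff q)) * φ q ^ 2 / 2 + Real.exp (-2 *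 F (ff q)) * ((1 * deriv F (ff q) + ff q * deriv (deriv F) (ff q)) * deriv F (ff q) + (ff q * deriv F (ff q) - ((n : ℝ) - 1) / 4) * deriv (deriv F) (ff q) - 1 / 2 * deriv (GF F) (ff q)) * φ q ^ 2 / 4) * q.2 j ^ 2 + (Real.exp (-2 * F (ff q)) * (2⁻¹ * (q.1 * fderiv ℝ φ q ((1:ℝ), (0:EuclideanSpace ℝ (Fin n))) + (∑ i, q.2 i * fderiv ℝ φ q (((0:ℝ), EuclideanSpace.single i (1:ℝ)))))) + Real.exp (-2 * F (ff q)) * (((n : ℝ) - 1) / 4 - ff q * deriv F (ff q)) * φ q) * fderiv ℝ (fderiv ℝ φ) q (((0:ℝ), EuclideanSpace.single j (1:ℝ))) (((0:ℝ), EuclideanSpace.single j (1:ℝ))) + (Real.exp (-2 * F (ff q)) * (fderiv ℝ φ q ((1:ℝ), (0:EuclideanSpace ℝ (Fin n)))) / 2) * (q.2 j * fderiv ℝ (fderiv ℝ φ) q ((1:ℝ), (0:EuclideanSpace ℝ (Fin n))) (((0:ℝ), EuclideanSpace.single j (1:ℝ)))) + (Real.exp (-2 * F (ff q)) * q.1 /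 2) * (fderiv ℝ φ q (((0:ℝ), EuclideanSpace.single j (1:ℝ))) * fderiv ℝ (fderiv ℝ φ) q ((1:ℝ), (0:EuclideanSpace ℝ (Fin n))) (((0:ℝ), EuclideanSpace.single j (1:ℝ)))) + (Real.exp (-2 * F (ff q)) / 2) * (fderiv ℝ φ q (((0:ℝ), EuclideanSpace.single j (1:ℝ))) * (∑ i, q.2 i * fderiv ℝ (fderiv ℝ φ) q (((0:ℝ), EuclideanSpace.single j (1:ℝ))) (((0:ℝ), EuclideanSpace.single i (1:ℝ))))) + (-(Real.exp (-2 * F (ff q)) / 4)) * (q.2 j * (∑ i, 2 * fderiv ℝ φ q (((0:ℝ), EuclideanSpace.single i (1:ℝ))) * fderiv ℝ (fderiv ℝ φ) q (((0:ℝ), EuclideanSpace.single j (1:ℝ))) (((0:ℝ), EuclideanSpace.single i (1:ℝ))))) + (Real.exp (-2 * F (ff q)) / 2) * (q.2 j * (fderiv ℝ U (q, φ q) ((((0:ℝ), EuclideanSpace.single j (1:ℝ))), (0:ℝ)))) + (-(Real.exp (-2 * F (ff q)) * (-fderiv ℝ φ q ((1:ℝ), (0:EuclideanSpace ℝ (Fin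 n))) ^ 2 + (∑ i, fderiv ℝ φ q (((0:ℝ), EuclideanSpace.single i (1:ℝ))) ^ 2)) / 4) + Real.exp (-2 * F (ff q)) * U (q, φ q) / 2 + Real.exp (-2 * F (ff q)) * ((ff q * deriv F (ff q) - ((n : ℝ) - 1) / 4) * deriv F (ff q) - 1 / 2 * GF F (ff q)) * φ q ^ 2 / 2)) := by
    rw [divP, hdtPt]
    congr 1
    exact Finset.sum_congr rfl fun j _ => hdxPx j
  -- sum collapse
  have hsum : (∑ j, ((-deriv F (ff q) * Real.exp (-2 * F (ff q)) * (2⁻¹ * (q.1 * fderiv ℝ φ q ((1:ℝ), (0:EuclideanSpace ℝ (Fin n))) + (∑ i, q.2 i * fderiv ℝ φ q (((0:ℝ), EuclideanSpace.single i (1:ℝ)))))) + Real.exp (-2 * F (ff q)) * (fderiv ℝ U (q, φ q) ((0:Spacetime n), (1:ℝ))) / 2 - deriv F (ff q) * Real.exp (-2 * F (ff q)) * (((n : ℝ) - 1) / 4 - ff q * deriv F (ff q)) * φ q - (deriv F (ff q) + ff q * deriv (deriv F) (ff q)) * Real.exp (-2 * F (ff q)) * φ q / 2 + Real.exp (-2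 * F (ff q)) * ((ff q * deriv F (ff q) - ((n : ℝ) - 1) / 4) * deriv F (ff q) - 1 / 2 * GF F (ff q)) * φ q) * (q.2 j * fderiv ℝ φ q (((0:ℝ), EuclideanSpace.single j (1:ℝ)))) + (Real.exp (-2 * F (ff q)) / 2 + Real.exp (-2 * F (ff q)) * (((n : ℝ) - 1) / 4 - ff q * deriv F (ff q))) * fderiv ℝ φ q (((0:ℝ), EuclideanSpace.single j (1:ℝ))) ^ 2 + (deriv F (ff q) * Real.exp (-2 * F (ff q)) * (-fderiv ℝ φ q ((1:ℝ), (0:EuclideanSpace ℝ (Fin n))) ^ 2 + (∑ i, fderiv ℝ φ q (((0:ℝ), EuclideanSpace.single i (1:ℝ))) ^ 2)) / 4 - deriv F (ff q) * Real.exp (-2 * F (ff q)) * U (q, φ q) / 2 - deriv F (ff q) * Real.exp (-2 * F (ff q)) * ((ff q * deriv F (ff q) - ((n : ℝ) - 1) / 4) * deriv F (ff q) - 1 / 2 * GF F (ff q)) * φ q ^ 2 / 2 + Real.exp (-2 * F (ff q)) * ((1 * deriv F (ff q) + ff q * deriv (deriv F) (ff q)) * deriv F (ff q) + (ff q * deriv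 F (ff q) - ((n : ℝ) - 1) / 4) * deriv (deriv F) (ff q) - 1 / 2 * deriv (GF F) (ff q)) * φ q ^ 2 / 4) * q.2 j ^ 2 + (Real.exp (-2 * F (ff q)) * (2⁻¹ * (q.1 * fderiv ℝ φ q ((1:ℝ), (0:EuclideanSpace ℝ (Fin n))) + (∑ i, q.2 i * fderiv ℝ φ q (((0:ℝ), EuclideanSpace.single i (1:ℝ)))))) + Real.exp (-2 * F (ff q)) * (((n : ℝ) - 1) / 4 - ff q * deriv F (ff q)) * φ q) * fderiv ℝ (fderiv ℝ φ) q (((0:ℝ), EuclideanSpace.single j (1:ℝ))) (((0:ℝ), EuclideanSpace.single j (1:ℝ))) + (Real.exp (-2 * F (ff q)) * (fderiv ℝ φ q ((1:ℝ), (0:EuclideanSpace ℝ (Fin n)))) / 2) * (q.2 j * fderiv ℝ (fderiv ℝ φ) q ((1:ℝ), (0:EuclideanSpace ℝ (Fin n))) (((0:ℝ), EuclideanSpace.single j (1:ℝ)))) + (Real.exp (-2 * F (ff q)) * q.1 / 2) * (fderiv ℝ φ q (((0:ℝ), EuclideanSpace.single j (1:ℝ))) * fderiv ℝ (fderiv ℝ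 φ) q ((1:ℝ), (0:EuclideanSpace ℝ (Fin n))) (((0:ℝ), EuclideanSpace.single j (1:ℝ)))) + (Real.exp (-2 * F (ff q)) / 2) * (fderiv ℝ φ q (((0:ℝ), EuclideanSpace.single j (1:ℝ))) * (∑ i, q.2 i * fderiv ℝ (fderiv ℝ φ) q (((0:ℝ), EuclideanSpace.single j (1:ℝ))) (((0:ℝ), EuclideanSpace.single i (1:ℝ))))) + (-(Real.exp (-2 * F (ff q)) / 4)) * (q.2 j * (∑ i, 2 * fderiv ℝ φ q (((0:ℝ), EuclideanSpace.single i (1:ℝ))) * fderiv ℝ (fderiv ℝ φ) q (((0:ℝ), EuclideanSpace.single j (1:ℝ))) (((0:ℝ), EuclideanSpace.single i (1:ℝ))))) + (Real.exp (-2 * F (ff q)) / 2) * (q.2 j * (fderiv ℝ U (q, φ q) ((((0:ℝ), EuclideanSpace.single j (1:ℝ))), (0:ℝ)))) + (-(Real.exp (-2 * F (ff q)) * (-fderiv ℝ φ q ((1:ℝ), (0:EuclideanSpace ℝ (Fin n))) ^ 2 + (∑ i, fderiv ℝ φ q (((0:ℝ), EuclideanSpace.single i (1:ℝ))) ^ 2))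 / 4) + Real.exp (-2 * F (ff q)) * U (q, φ q) / 2 + Real.exp (-2 * F (ff q)) * ((ff q * deriv F (ff q) - ((n : ℝ) - 1) / 4) * deriv F (ff q) - 1 / 2 * GF F (ff q)) * φ q ^ 2 / 2))) =
      (-deriv F (ff q) * Real.exp (-2 * F (ff q)) * (2⁻¹ * (q.1 * fderiv ℝ φ q ((1:ℝ), (0:EuclideanSpace ℝ (Fin n))) + (∑ i, q.2 i * fderiv ℝ φ q (((0:ℝ), EuclideanSpace.single i (1:ℝ)))))) + Real.exp (-2 * F (ff q)) * (fderiv ℝ U (q, φ q) ((0:Spacetime n), (1:ℝ))) / 2 - deriv F (ff q) * Real.exp (-2 * F (ff q)) * (((n : ℝ) - 1) / 4 - ff q * deriv F (ff q)) * φ q - (deriv F (ff q) + ff q * deriv (deriv F) (ff q)) * Real.exp (-2 * F (ff q)) * φ q / 2 + Real.exp (-2 * F (ff q)) * ((ff q * deriv F (ff q) - ((n : ℝ) - 1) / 4) * deriv F (ff q) - 1 / 2 * GF F (ff q)) * φ q) * (∑ i, q.2 i * fderiv ℝ φ q (((0:ℝ), EuclideanSpace.single i (1:ℝ)))) + (Real.exp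 (-2 * F (ff q)) / 2 + Real.exp (-2 * F (ff q)) * (((n : ℝ) - 1) / 4 - ff q * deriv F (ff q))) * (∑ i, fderiv ℝ φ q (((0:ℝ), EuclideanSpace.single i (1:ℝ))) ^ 2) + (deriv F (ff q) * Real.exp (-2 * F (ff q)) * (-fderiv ℝ φ q ((1:ℝ), (0:EuclideanSpace ℝ (Fin n))) ^ 2 + (∑ i, fderiv ℝ φ q (((0:ℝ), EuclideanSpace.single i (1:ℝ))) ^ 2)) / 4 - deriv F (ff q) * Real.exp (-2 * F (ff q)) * U (q, φ q) / 2 - deriv F (ff q) * Real.exp (-2 * F (ff q)) * ((ff q * deriv F (ff q) - ((n : ℝ) - 1) / 4) * deriv F (ff q) - 1 / 2 * GF F (ff q)) * φ q ^ 2 / 2 + Real.exp (-2 * F (ff q)) * ((1 * deriv F (ff q) + ff q * deriv (deriv F) (ff q)) * deriv F (ff q) + (ff q * deriv F (ff q) - ((n : ℝ) - 1) / 4) * deriv (deriv F) (ff q) - 1 / 2 * deriv (GF F) (ff q)) * φ q ^ 2 / 4) * (∑ i, q.2 i ^ 2) + (Real.exp (-2 * F (ff q)) * (2⁻¹ * (q.1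 * fderiv ℝ φ q ((1:ℝ), (0:EuclideanSpace ℝ (Fin n))) + (∑ i, q.2 i * fderiv ℝ φ q (((0:ℝ), EuclideanSpace.single i (1:ℝ)))))) + Real.exp (-2 * F (ff q)) * (((n : ℝ) - 1) / 4 - ff q * deriv F (ff q)) * φ q) * (∑ i, fderiv ℝ (fderiv ℝ φ) q (((0:ℝ), EuclideanSpace.single i (1:ℝ))) (((0:ℝ), EuclideanSpace.single i (1:ℝ)))) + (Real.exp (-2 * F (ff q)) * (fderiv ℝ φ q ((1:ℝ), (0:EuclideanSpace ℝ (Fin n)))) / 2) * (∑ i, q.2 i * fderiv ℝ (fderiv ℝ φ) q ((1:ℝ), (0:EuclideanSpace ℝ (Fin n))) (((0:ℝ), EuclideanSpace.single i (1:ℝ)))) + (Real.exp (-2 * F (ff q)) * q.1 / 2) * (∑ i, fderiv ℝ φ q (((0:ℝ), EuclideanSpace.single i (1:ℝ))) * fderiv ℝ (fderiv ℝ φ) q ((1:ℝ), (0:EuclideanSpace ℝ (Fin n))) (((0:ℝ), EuclideanSpace.single i (1:ℝ))))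
      + (Real.exp (-2 * F (ff q)) / 2) * (∑ j, fderiv ℝ φ q (((0:ℝ), EuclideanSpace.single j (1:ℝ))) * (∑ i, q.2 i * fderiv ℝ (fderiv ℝ φ) q (((0:ℝ), EuclideanSpace.single j (1:ℝ))) (((0:ℝ), EuclideanSpace.single i (1:ℝ))))) + (-(Real.exp (-2 * F (ff q)) / 4)) * (∑ j, q.2 j * (∑ i, 2 * fderiv ℝ φ q (((0:ℝ), EuclideanSpace.single i (1:ℝ))) * fderiv ℝ (fderiv ℝ φ) q (((0:ℝ), EuclideanSpace.single j (1:ℝ))) (((0:ℝ), EuclideanSpace.single i (1:ℝ))))) + (Real.exp (-2 * F (ff q)) / 2) * (∑ i, q.2 i * (fderiv ℝ U (q, φ q) ((((0:ℝ), EuclideanSpace.single i (1:ℝ))), (0:ℝ)))) + (n : ℝ) * (-(Real.exp (-2 * F (ff q)) * (-fderiv ℝ φ q ((1:ℝ), (0:EuclideanSpace ℝ (Fin n))) ^ 2 + (∑ i, fderiv ℝ φ q (((0:ℝ), EuclideanSpace.single i (1:ℝ))) ^ 2)) / 4) + Real.exp (-2 * F (ff q)) * U (q, φ q) / 2 + Real.exp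 (-2 * F (ff q)) * ((ff q * deriv F (ff q) - ((n : ℝ) - 1) / 4) * deriv F (ff q) - 1 / 2 * GF F (ff q)) * φ q ^ 2 / 2) := by
    simp only [Finset.sum_add_distrib, ← Finset.mul_sum, Finset.sum_const, Finset.card_univ,
      Fintype.card_fin, nsmul_eq_mul]
    ring
  have hswap : (∑ j, q.2 j * (∑ i, 2 * fderiv ℝ φ q (((0:ℝ), EuclideanSpace.single i (1:ℝ))) * fderiv ℝ (fderiv ℝ φ) q (((0:ℝ), EuclideanSpace.single j (1:ℝ))) (((0:ℝ), EuclideanSpace.single i (1:ℝ))))) = 2 * (∑ j, fderiv ℝ φ q (((0:ℝ), EuclideanSpace.single j (1:ℝ))) * (∑ i, q.2 i * fderiv ℝ (fderiv ℝ φ) q (((0:ℝ), EuclideanSpace.single j (1:ℝ))) (((0:ℝ), EuclideanSpace.single i (1:ℝ))))) := by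
    have h1 : ∀ j : Fin n, q.2 j * (∑ i, 2 * fderiv ℝ φ q (((0:ℝ), EuclideanSpace.single i (1:ℝ))) * fderiv ℝ (fderiv ℝ φ) q (((0:ℝ), EuclideanSpace.single j (1:ℝ))) (((0:ℝ), EuclideanSpace.single i (1:ℝ)))) =
        ∑ i, q.2 j * (2 * fderiv ℝ φ q (((0:ℝ), EuclideanSpace.single i (1:ℝ))) * fderiv ℝ (fderiv ℝ φ) q (((0:ℝ), EuclideanSpace.single j (1:ℝ))) (((0:ℝ), EuclideanSpace.single i (1:ℝ)))) := fun j => Finset.mul_sum _ _ _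
    rw [Finset.sum_congr rfl fun j _ => h1 j, Finset.sum_comm, Finset.mul_sum]
    refine Finset.sum_congr rfl fun i _ => ?_
    conv_rhs => rw [Finset.mul_sum, Finset.mul_sum]
    refine Finset.sum_congr rfl fun j _ => ?_
    rw [hsym (((0:ℝ), EuclideanSpace.single j (1:ℝ))) (((0:ℝ), EuclideanSpace.single i (1:ℝ)))]
    ring
  -- box, Bulk
  have hbox : box φ q = -(fderiv ℝ (fderiv ℝ φ) q ((1:ℝ), (0:EuclideanSpace ℝ (Fin n))) ((1:ℝ), (0:EuclideanSpace ℝ (Fin n)))) + (∑ i, fderiv ℝ (fderiv ℝ φ) q (((0:ℝ), EuclideanSpace.single i (1:ℝ))) (((0:ℝ), EuclideanSpace.single i (1:ℝ)))) := by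
    have h1 : HasFDerivAt (dt φ) ((fderiv ℝ φ q).comp (0 : Spacetime n →L[ℝ] Spacetime n)
        + (fderiv ℝ (fderiv ℝ φ) q).flip ((1:ℝ), (0:EuclideanSpace ℝ (Fin n)))) q := hDe _
    have h2 : ∀ i : Fin n, HasFDerivAt (dx i φ)
        ((fderiv ℝ φ q).comp (0 : Spacetime n →L[ℝ] Spacetime n)
          + (fderiv ℝ (fderiv ℝ φ) q).flip (((0:ℝ), EuclideanSpace.single i (1:ℝ)))) q := fun i => hDe _
    have h4 : fderiv ℝ (dt φ) q ((1:ℝ), (0:EuclideanSpace ℝ (Fin n))) = fderiv ℝ (fderiv ℝ φ) q ((1:ℝ), (0:EuclideanSpace ℝ (Fin n))) ((1:ℝ), (0:EuclideanSpace ℝ (Fin n))) := by rw [h1.fderiv]; simp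
    have h3 : ∀ i : Fin n, fderiv ℝ (dx i φ) q (((0:ℝ), EuclideanSpace.single i (1:ℝ))) = fderiv ℝ (fderiv ℝ φ) q (((0:ℝ), EuclideanSpace.single i (1:ℝ))) (((0:ℝ), EuclideanSpace.single i (1:ℝ))) := fun i => by
      rw [(h2 i).fderiv]; simp
    rw [box]
    simp only [dt, dx]
    rw [h4, Finset.sum_congr rfl fun i _ => h3 i]
  have hgrad : gradfU U φ q = q.1 / 2 * (fderiv ℝ U (q, φ q) (((1:ℝ), (0:EuclideanSpace ℝ (Fin n))), (0:ℝ))) + (∑ i, q.2 i * (fderiv ℝ U (q, φ q) ((((0:ℝ), EuclideanSpace.single i (1:ℝ))), (0:ℝ)))) / 2 := by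
    have hpull : (∑ i, q.2 i * (fderiv ℝ U (q, φ q) ((((0:ℝ), EuclideanSpace.single i (1:ℝ))), (0:ℝ)))) / 2 = ∑ i, q.2 i / 2 * (fderiv ℝ U (q, φ q) ((((0:ℝ), EuclideanSpace.single i (1:ℝ))), (0:ℝ))) := by
      rw [Finset.sum_div]; exact Finset.sum_congr rfl fun i _ => by ring
    rw [hpull]
    simp only [gradfU, dt, dx]
    rw [(CPhasFDerivAt_ff q).fderiv, hUfr.fderiv]
    simp only [CPLq_e0, CPLq_ex, ContinuousLinearMap.coe_comp', Function.comp_apply,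
      ContinuousLinearMap.prod_apply, ContinuousLinearMap.id_apply,
      ContinuousLinearMap.zero_apply]
    ring
  have hBulk : Bulk F U φ q = Real.exp (-2 * F (ff q)) * (((n : ℝ) - 1) / 4 - ff q * deriv F (ff q)) * (fderiv ℝ U (q, φ q) ((0:Spacetime n), (1:ℝ))) * φ q - Real.exp (-2 * F (ff q)) * (q.1 / 2 * (fderiv ℝ U (q, φ q) (((1:ℝ), (0:EuclideanSpace ℝ (Fin n))), (0:ℝ))) + (∑ i, q.2 i * (fderiv ℝ U (q, φ q) ((((0:ℝ), EuclideanSpace.single i (1:ℝ))), (0:ℝ)))) / 2) - 2 * Real.exp (-2 * F (ff q)) * (((n : ℝ) + 1) / 4 - ff q * deriv F (ff q)) * U (q, φ q) := by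
    simp only [Bulk]
    rw [hUdot, hgrad]
  have hw2 : Real.exp (-2 * F (ff q)) = Real.exp (-(F (ff q))) ^ 2 := by
    rw [show (-2 : ℝ) * F (ff q) = -F (ff q) + -F (ff q) by ring, Real.exp_add, sq]
  -- the master identity
  have hmain : divP F U φ q + Bulk F U φ q =
      (Real.exp (-(F (ff q))) * (box φ q + Udot U φ q)) * (Real.exp (-(F (ff q))) * (2⁻¹ * (q.1 * fderiv ℝ φ q ((1:ℝ), (0:EuclideanSpace ℝ (Fin n))) + (∑ i, q.2 i * fderiv ℝ φ q (((0:ℝ), EuclideanSpace.single i (1:ℝ))))) + (((n : ℝ) - 1) / 4 - ff q * deriv F (ff q)) * φ q)) + 2 * -deriv F (ff q) * (Real.exp (-(F (ff q))) * (2⁻¹ * (q.1 * fderiv ℝ φ q ((1:ℝ), (0:EuclideanSpace ℝ (Fin n))) + (∑ i, q.2 i * fderiv ℝ φ q (((0:ℝ), EuclideanSpace.single i (1:ℝ))))) + (((n : ℝ) - 1) / 4 - ff q * deriv F (ff q)) * φ q)) ^ 2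
      + (ff q * -deriv F (ff q) * GF F (ff q) - HF F (ff q)) *
          (Real.exp (-(F (ff q))) * φ q) ^ 2 := by
    rw [hdivP, hBulk, hsum, hswap, hbox, hUdot, hHFe, hG0]
    rw [show (∑ i, 2 * fderiv ℝ φ q (((0:ℝ), EuclideanSpace.single i (1:ℝ))) * (fderiv ℝ (fderiv ℝ φ) q ((1:ℝ), (0:EuclideanSpace ℝ (Fin n))) (((0:ℝ), EuclideanSpace.single i (1:ℝ))))) = 2 * ∑ i, fderiv ℝ φ q (((0:ℝ), EuclideanSpace.single i (1:ℝ))) * (fderiv ℝ (fderiv ℝ φ) q ((1:ℝ), (0:EuclideanSpace ℝ (Fin n))) (((0:ℝ), EuclideanSpace.single i (1:ℝ)))) from by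
      rw [Finset.mul_sum]; exact Finset.sum_congr rfl fun i _ => by ring]
    rw [hw2, CPff_eq q]
    ring
  -- conclusion
  rw [ge_iff_le, abs_of_neg hF1neg]
  have hu : (0:ℝ) < -deriv F (ff q) := neg_pos.mpr hF1neg
  have h2 : (ff q * -deriv F (ff q) * GF F (ff q) - HF F (ff q)) *
        (Real.exp (-(F (ff q))) * φ q) ^ 2 - Bulk F U φ q - divP F U φ q
      = -((Real.exp (-(F (ff q))) * (box φ q + Udot U φ q)) * (Real.exp (-(F (ff q))) * (2⁻¹ * (q.1 * fderiv ℝ φ q ((1:ℝ), (0:EuclideanSpace ℝ (Fin n))) + (∑ i, q.2 i * fderiv ℝ φ q (((0:ℝ), EuclideanSpace.single i (1:ℝ))))) + (((n : ℝ) - 1) / 4 - ff q * deriv F (ff q)) * φ q)) + 2 * -deriv F (ff q) * (Real.exp (-(F (ff q))) * (2⁻¹ * (q.1 * fderiv ℝ φ q ((1:ℝ), (0:EuclideanSpace ℝ (Fin n))) + (∑ i, q.2 i * fderiv ℝ φ q (((0:ℝ), EuclideanSpace.single i (1:ℝ))))) + (((n : ℝ) - 1) / 4 - ff q * deriv F (ff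 q)) * φ q)) ^ 2) := by
    linear_combination -hmain
  rw [h2]
  have h3 : 1 / 8 * (-deriv F (ff q))⁻¹ *
        (Real.exp (-(F (ff q))) * (box φ q + Udot U φ q)) ^ 2
        + ((Real.exp (-(F (ff q))) * (box φ q + Udot U φ q)) * (Real.exp (-(F (ff q))) * (2⁻¹ * (q.1 * fderiv ℝ φ q ((1:ℝ), (0:EuclideanSpace ℝ (Fin n))) + (∑ i, q.2 i * fderiv ℝ φ q (((0:ℝ), EuclideanSpace.single i (1:ℝ))))) + (((n : ℝ) - 1) / 4 - ff q * deriv F (ff q)) * φ q)) + 2 * -deriv F (ff q) * (Real.exp (-(F (ff q))) * (2⁻¹ * (q.1 * fderiv ℝ φ q ((1:ℝ), (0:EuclideanSpace ℝ (Fin n))) + (∑ i, q.2 i * fderiv ℝ φ q (((0:ℝ), EuclideanSpace.single i (1:ℝ))))) + (((n : ℝ) - 1) / 4 - ff q * deriv F (ff q)) * φ q)) ^ 2)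
      = (8 * -deriv F (ff q))⁻¹ * ((Real.exp (-(F (ff q))) * (box φ q + Udot U φ q)) + 4 * -deriv F (ff q) * (Real.exp (-(F (ff q))) * (2⁻¹ * (q.1 * fderiv ℝ φ q ((1:ℝ), (0:EuclideanSpace ℝ (Fin n))) + (∑ i, q.2 i * fderiv ℝ φ q (((0:ℝ), EuclideanSpace.single i (1:ℝ))))) + (((n : ℝ) - 1) / 4 - ff q * deriv F (ff q)) * φ q))) ^ 2 := by
    field_simp [hF1neg.ne]
    ring
  have h5 : (0:ℝ) < 8 * -deriv F (ff q) := by linarith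
  have h4 : 0 ≤ (8 * -deriv F (ff q))⁻¹ * ((Real.exp (-(F (ff q))) * (box φ q + Udot U φ q)) + 4 * -deriv F (ff q) * (Real.exp (-(F (ff q))) * (2⁻¹ * (q.1 * fderiv ℝ φ q ((1:ℝ), (0:EuclideanSpace ℝ (Fin n))) + (∑ i, q.2 i * fderiv ℝ φ q (((0:ℝ), EuclideanSpace.single i (1:ℝ))))) + (((n : ℝ) - 1) / 4 - ff q * deriv F (ff q)) * φ q))) ^ 2 :=
    mul_nonneg (inv_nonneg.mpr h5.le) (sq_nonneg _)
  linarith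
end
end

section
/- Let n ≥ 2, δ > 0, and 0 < β < δ. Let Ψ be a continuous function on D with M := sup_{(t,x) ∈ D} ( |x| + (|x|²−t²)/4 )^{n−1+δ}·|Ψ(t,x)| < ∞. For ω > 0 define J(ω) := ω^β · ∫_{t ∈ ℝ} ∫_{σ ∈ S^{n−1}} |Ψ( t, √(t²+4ω)·σ )| · (t²+4ω)^{(n−2)/2} dσ dt, where dσ is the standard surface measure on the unit sphere S^{n−1} ⊆ ℝⁿ. Then J(ω) is finite for every ω > 0, and J(ω) → 0 as ω → ∞. (Up to a factor 2, J(ω) is the integral of f^{−1/2+β}·|Ψ| over the timelike hyperboloid {f = ω} ⊆ D with respect to its induced volume form.) -/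
/-!
On the hyperboloid `{f = ω}` one has `|x| = √(t² + 4ω) ≥ |t|` and `f = ω`, so the weighted
bound on `Ψ` together with `|x|^{n-2} ≤ (|x| + ω)^{n-2}` dominates the integrand by
`M (|t| + ω)^{-(1+δ)}`, uniformly in `σ`. This majorant is integrable in `t`, and the substitution
`t = ω u` shows that its integral is a constant times `ω^{-δ}`; hence `J(ω) = O(ω^{β-δ})`.
-/

open Real MeasureTheory Filter
open scoped BigOperators Topology

noncomputable section

/-- The standard surface measure on the unit sphere `S^{n−1} ⊆ ℝⁿ`. -/
def sphMeasure (n : ℕ) : Measure (Metric.sphere (0 : EuclideanSpace ℝ (Fin n)) 1) :=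
  (volume : Measure (EuclideanSpace ℝ (Fin n))).toSphere

open Set

theorem mul_rpow_le_mul_abs_add_rpow_neg {a r t ω k s M : ℝ} (ha : 0 ≤ a) (hω : 0 < ω)
    (htr : |t| ≤ r) (hk : 0 ≤ k) (hs : 0 ≤ s) (hM : (r + ω) ^ (k + s) * a ≤ M) :
    a * r ^ k ≤ M * (|t| + ω) ^ (-s) := by
  have hr : 0 ≤ r := (abs_nonneg t).trans htr
  have hrω : 0 < r + ω := by linarith
  have hM0 : 0 ≤ M := (mul_nonneg (rpow_nonneg hrω.le _) ha).trans hM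
  calc a * r ^ k ≤ a * (r + ω) ^ k :=
        mul_le_mul_of_nonneg_left (rpow_le_rpow hr (by linarith) hk) ha
    _ = (r + ω) ^ (k + s) * a * (r + ω) ^ (-s) := by
        rw [mul_right_comm, ← rpow_add hrω, add_neg_cancel_right, mul_comm]
    _ ≤ M * (r + ω) ^ (-s) := mul_le_mul_of_nonneg_right hM (rpow_nonneg hrω.le _)
    _ ≤ M * (|t| + ω) ^ (-s) :=
        mul_le_mul_of_nonneg_left
          (rpow_le_rpow_of_nonpos (by positivity) (by linarith) (by linarith)) hM0

theorem abs_add_rpow_neg_eq {ω : ℝ} (hω : 0 < ω) (s t : ℝ) :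
    (|t| + ω) ^ (-s) = ω ^ (-s) * (1 + |t / ω|) ^ (-s) := by
  have : |t| + ω = ω * (1 + |t / ω|) := by
    rw [abs_div, abs_of_pos hω]
    field_simp
    ring
  rw [this, mul_rpow hω.le (by positivity)]

theorem integrable_abs_add_rpow_neg {ω s : ℝ} (hω : 0 < ω) (hs : 1 < s) :
    Integrable (fun t : ℝ => (|t| + ω) ^ (-s)) := by
  simp_rw [abs_add_rpow_neg_eq hω]
  have h : Integrable (fun u : ℝ => (1 + |u|) ^ (-s)) := by
    simpa using integrable_one_add_norm (E := ℝ) (μ := volume) (r := s) (by simpa using hs)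
  exact (h.comp_div hω.ne').const_mul _

theorem integral_abs_add_rpow_neg {ω : ℝ} (hω : 0 < ω) (s : ℝ) :
    ∫ t : ℝ, (|t| + ω) ^ (-s) = ω ^ (1 - s) * ∫ t : ℝ, (1 + |t|) ^ (-s) := by
  simp_rw [abs_add_rpow_neg_eq hω]
  rw [integral_const_mul, Measure.integral_comp_div (fun u => (1 + |u|) ^ (-s)), abs_of_pos hω,
    smul_eq_mul, ← mul_assoc, sub_eq_add_neg, rpow_add hω, rpow_one, mul_comm (ω ^ (-s))]

theorem integral_integral_le_measureReal_mul {α β : Type*} [MeasurableSpace α]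
    [MeasurableSpace β] {μ : Measure α} {ν : Measure β} [IsFiniteMeasure ν] {F : α → β → ℝ}
    {g : α → ℝ} (hF : ∀ a b, 0 ≤ F a b) (hFg : ∀ a b, F a b ≤ g a) (hg : Integrable g μ) :
    ∫ a, ∫ b, F a b ∂ν ∂μ ≤ ν.real univ * ∫ a, g a ∂μ := by
  rw [← integral_const_mul]
  refine integral_mono_of_nonneg (ae_of_all _ fun a => integral_nonneg (hF a))
    (hg.const_mul _) (ae_of_all _ fun a => ?_)
  calc ∫ b, F a b ∂ν ≤ ∫ _, g a ∂ν :=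
        integral_mono_of_nonneg (ae_of_all _ (hF a)) (integrable_const _) (ae_of_all _ (hFg a))
    _ = ν.real univ * g a := by rw [integral_const, smul_eq_mul]

abbrev UnitSphere (n : ℕ) := Metric.sphere (0 : EuclideanSpace ℝ (Fin n)) 1

instance isFiniteMeasure_sphMeasure (n : ℕ) : IsFiniteMeasure (sphMeasure n) := by
  unfold sphMeasure
  infer_instance

section Hyperboloid

variable {n : ℕ} {Ψ : Spacetime n → ℝ} {δ M ω : ℝ}

def hyperboloidPoint (ω t : ℝ) (σ : UnitSphere n) : Spacetime n :=
  (t, √(t ^ 2 + 4 * ω) • (σ : EuclideanSpace ℝ (Fin n)))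

def hyperboloidIntegrand (Ψ : Spacetime n → ℝ) (ω t : ℝ) (σ : UnitSphere n) : ℝ :=
  |Ψ (hyperboloidPoint ω t σ)| * (t ^ 2 + 4 * ω) ^ (((n : ℝ) - 2) / 2)

theorem norm_hyperboloidPoint_snd (ω t : ℝ) (σ : UnitSphere n) :
    ‖(hyperboloidPoint ω t σ).2‖ = √(t ^ 2 + 4 * ω) := by
  simp [hyperboloidPoint, norm_smul]

theorem hyperboloidPoint_mem_Dom (hω : 0 < ω) (t : ℝ) (σ : UnitSphere n) :
    hyperboloidPoint ω t σ ∈ Dom n := by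
  change |t| < ‖(hyperboloidPoint ω t σ).2‖
  rw [norm_hyperboloidPoint_snd, ← sqrt_sq_eq_abs]
  exact sqrt_lt_sqrt (sq_nonneg t) (by linarith)

theorem continuous_hyperboloidPoint (ω : ℝ) :
    Continuous (fun q : ℝ × UnitSphere n => hyperboloidPoint ω q.1 q.2) := by
  unfold hyperboloidPoint
  fun_prop

theorem hyperboloidIntegrand_nonneg (hω : 0 ≤ ω) (t : ℝ) (σ : UnitSphere n) :
    0 ≤ hyperboloidIntegrand Ψ ω t σ := by
  unfold hyperboloidIntegrand
  positivity

theorem continuous_hyperboloidIntegrand (hΨ : ContinuousOn Ψ (Dom n)) (hω : 0 < ω) :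
    Continuous (fun q : ℝ × UnitSphere n => hyperboloidIntegrand Ψ ω q.1 q.2) := by
  have hΨω := hΨ.comp_continuous (continuous_hyperboloidPoint ω)
    fun q => hyperboloidPoint_mem_Dom hω q.1 q.2
  exact hΨω.abs.mul <| (by fun_prop : Continuous fun q : ℝ × UnitSphere n => q.1 ^ 2 + 4 * ω)
    |>.rpow_const fun q => Or.inl (by positivity)

variable (hM : ∀ p ∈ Dom n,
  (‖p.2‖ + (‖p.2‖ ^ 2 - p.1 ^ 2) / 4) ^ ((n : ℝ) - 1 + δ) * |Ψ p| ≤ M)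
include hM

theorem hyperboloidIntegrand_le (hn : 2 ≤ n) (hδ : -1 ≤ δ) (hω : 0 < ω) (t : ℝ)
    (σ : UnitSphere n) : hyperboloidIntegrand Ψ ω t σ ≤ M * (|t| + ω) ^ (-(1 + δ)) := by
  have hx : 0 ≤ t ^ 2 + 4 * ω := by positivity
  have hp := hM _ (hyperboloidPoint_mem_Dom hω t σ)
  rw [norm_hyperboloidPoint_snd, sq_sqrt hx, show (hyperboloidPoint ω t σ).1 = t from rfl,
    show (t ^ 2 + 4 * ω - t ^ 2) / 4 = ω by ring] at hp
  have hpow : (t ^ 2 + 4 * ω) ^ (((n : ℝ) - 2) / 2) = √(t ^ 2 + 4 * ω) ^ ((n : ℝ) - 2) := by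
    rw [sqrt_eq_rpow, ← rpow_mul hx, one_div_mul_eq_div]
  have hn' : (2 : ℝ) ≤ n := by exact_mod_cast hn
  rw [hyperboloidIntegrand, hpow]
  refine mul_rpow_le_mul_abs_add_rpow_neg (abs_nonneg _) hω (abs_le_sqrt (by linarith))
    (by linarith) (by linarith) ?_
  convert hp using 3
  ring

theorem integrable_hyperboloidIntegrand (hn : 2 ≤ n) (hδ : 0 < δ)
    (hΨ : ContinuousOn Ψ (Dom n)) (hω : 0 < ω) :
    Integrable (fun q : ℝ × UnitSphere n => hyperboloidIntegrand Ψ ω q.1 q.2)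
      ((volume : Measure ℝ).prod (sphMeasure n)) := by
  have hmaj := ((integrable_abs_add_rpow_neg (s := 1 + δ) hω (by linarith)).const_mul M).comp_fst
    (sphMeasure n)
  refine hmaj.mono' (continuous_hyperboloidIntegrand hΨ hω).aestronglyMeasurable
    (ae_of_all _ fun q => ?_)
  rw [norm_of_nonneg (hyperboloidIntegrand_nonneg hω.le _ _)]
  exact hyperboloidIntegrand_le hM hn (by linarith) hω _ _

theorem integral_hyperboloidIntegrand_le (hn : 2 ≤ n) (hδ : 0 < δ) (hω : 0 < ω) :
    ∫ t, ∫ σ, hyperboloidIntegrand Ψ ω t σ ∂sphMeasure n ≤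
      (sphMeasure n).real univ * (M * ∫ t : ℝ, (1 + |t|) ^ (-(1 + δ))) * ω ^ (-δ) := by
  calc ∫ t, ∫ σ, hyperboloidIntegrand Ψ ω t σ ∂sphMeasure n
      ≤ (sphMeasure n).real univ * ∫ t : ℝ, M * (|t| + ω) ^ (-(1 + δ)) :=
        integral_integral_le_measureReal_mul (hyperboloidIntegrand_nonneg hω.le)
          (hyperboloidIntegrand_le hM hn (by linarith) hω)
          ((integrable_abs_add_rpow_neg hω (by linarith)).const_mul M)
    _ = _ := by
        rw [integral_const_mul, integral_abs_add_rpow_neg hω, show 1 - (1 + δ) = -δ by ring]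
        ring

end Hyperboloid

theorem boundary_limit_nullinfinity_general (n : ℕ) (hn : 2 ≤ n) (δ β : ℝ) (hδ : 0 < δ)
    (hβδ : β < δ)
    (Ψ : Spacetime n → ℝ) (hΨ : ContinuousOn Ψ (Dom n))
    (M : ℝ)
    (hM : ∀ p ∈ Dom n,
      (‖p.2‖ + (‖p.2‖ ^ 2 - p.1 ^ 2) / 4) ^ ((n : ℝ) - 1 + δ) * |Ψ p| ≤ M) :
    (∀ ω : ℝ, 0 < ω →
      Integrable
        (fun q : ℝ × Metric.sphere (0 : EuclideanSpace ℝ (Fin n)) 1 =>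
          |Ψ (q.1, Real.sqrt (q.1 ^ 2 + 4 * ω) • (q.2 : EuclideanSpace ℝ (Fin n)))| *
            (q.1 ^ 2 + 4 * ω) ^ (((n : ℝ) - 2) / 2))
        ((volume : Measure ℝ).prod (sphMeasure n))) ∧
    Tendsto
      (fun ω : ℝ => ω ^ β *
        ∫ t : ℝ, ∫ σ : Metric.sphere (0 : EuclideanSpace ℝ (Fin n)) 1,
          |Ψ (t, Real.sqrt (t ^ 2 + 4 * ω) • (σ : EuclideanSpace ℝ (Fin n)))| *
            (t ^ 2 + 4 * ω) ^ (((n : ℝ) - 2) / 2) ∂(sphMeasure n))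
      atTop (𝓝 0) := by
  refine ⟨fun ω hω => integrable_hyperboloidIntegrand hM hn hδ hΨ hω, ?_⟩
  set C := (sphMeasure n).real univ * (M * ∫ t : ℝ, (1 + |t|) ^ (-(1 + δ)))
  have hJ : ∀ ω : ℝ, 0 < ω →
      ω ^ β * ∫ t, ∫ σ, hyperboloidIntegrand Ψ ω t σ ∂sphMeasure n ≤ C * ω ^ (-(δ - β)) := by
    intro ω hω
    calc ω ^ β * ∫ t, ∫ σ, hyperboloidIntegrand Ψ ω t σ ∂sphMeasure n
        ≤ ω ^ β * (C * ω ^ (-δ)) := mul_le_mul_of_nonneg_left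
          (integral_hyperboloidIntegrand_le hM hn hδ hω) (rpow_nonneg hω.le _)
      _ = C * ω ^ (-(δ - β)) := by
          rw [mul_left_comm, ← rpow_add hω, show β + -δ = -(δ - β) by ring]
  refine squeeze_zero' ?_ ?_
    (by simpa only [mul_zero] using (tendsto_rpow_neg_atTop (sub_pos.2 hβδ)).const_mul C)
  · filter_upwards [eventually_ge_atTop 0] with ω hω
    exact mul_nonneg (rpow_nonneg hω _) <|
      integral_nonneg fun t => integral_nonneg (hyperboloidIntegrand_nonneg hω t)
  · filter_upwards [eventually_gt_atTop 0] with ω hω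
    exact hJ ω hω

/-- **Lemma 3.10** (boundary limit at null infinity): if `Ψ` is continuous on `D` with
`sup_D (|x| + f)^{n−1+δ}|Ψ| < ∞` where `f = (|x|²−t²)/4`, then for `0 < β < δ` the weighted
integral `J(ω)` of `|Ψ|` over the hyperboloid `{f = ω}` is finite for every `ω > 0` and
tends to `0` as `ω → ∞`. -/
theorem boundary_limit_nullinfinity (n : ℕ) (hn : 2 ≤ n) (δ β : ℝ) (hδ : 0 < δ)
    (hβ0 : 0 < β) (hβδ : β < δ)
    (Ψ : Spacetime n → ℝ) (hΨ : ContinuousOn Ψ (Dom n))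
    (M : ℝ)
    (hM : ∀ p ∈ Dom n,
      (‖p.2‖ + (‖p.2‖ ^ 2 - p.1 ^ 2) / 4) ^ ((n : ℝ) - 1 + δ) * |Ψ p| ≤ M) :
    (∀ ω : ℝ, 0 < ω →
      Integrable
        (fun q : ℝ × Metric.sphere (0 : EuclideanSpace ℝ (Fin n)) 1 =>
          |Ψ (q.1, Real.sqrt (q.1 ^ 2 + 4 * ω) • (q.2 : EuclideanSpace ℝ (Fin n)))| *
            (q.1 ^ 2 + 4 * ω) ^ (((n : ℝ) - 2) / 2))
        ((volume : Measure ℝ).prod (sphMeasure n))) ∧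
    Tendsto
      (fun ω : ℝ => ω ^ β *
        ∫ t : ℝ, ∫ σ : Metric.sphere (0 : EuclideanSpace ℝ (Fin n)) 1,
          |Ψ (t, Real.sqrt (t ^ 2 + 4 * ω) • (σ : EuclideanSpace ℝ (Fin n)))| *
            (t ^ 2 + 4 * ω) ^ (((n : ℝ) - 2) / 2) ∂(sphMeasure n))
      atTop (𝓝 0) :=
  boundary_limit_nullinfinity_general n hn δ β hδ hβδ Ψ hΨ M hM
end
end
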